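/- arXiv:2511.07132 — 6 statements merged into one kernel-verified Lean document; each statement's English description precedes it below -/
import Mathlib

section
/- For real numbers A, B with A ≠ 0 and T ≥ 1, the integral ∫_T^{2T} cos(A√t + B) dt is bounded in absolute value by a constant times T^{1/2}/|A|. -/
/-- For `A ≠ 0` and `T ≥ 1`, `∫_T^{2T} cos(A√t + B) dt ≪ T^{1/2}/|A|`. -/
theorem stmt_1 :
    ∃ C > 0, ∀ A B T : ℝ, A ≠ 0 → 1 ≤ T →
      |∫ t in T..(2 * T), Real.cos (A * Real.sqrt t + B)| ≤ C * Real.sqrt T / |A| := by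
  refine ⟨8, by norm_num, ?_⟩
  intro A B T hA hT
  have hT0 : (0:ℝ) < T := lt_of_lt_of_le one_pos hT
  have hA0 : 0 < |A| := abs_pos.mpr hA
  set H : ℝ → ℝ := fun t => (2 * Real.sqrt t / A) * Real.sin (A * Real.sqrt t + B)
      + (2 / A ^ 2) * Real.cos (A * Real.sqrt t + B) with hH
  have hderiv : ∀ t ∈ Set.uIcc T (2*T),
      HasDerivAt H (Real.cos (A * Real.sqrt t + B)) t := by
    intro t ht
    have htpos : 0 < t := by
      rcases Set.mem_uIcc.mp ht with h | h
      · linarith [h.1]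
      · nlinarith [h.1]
    have hs : HasDerivAt Real.sqrt (1/(2*Real.sqrt t)) t := Real.hasDerivAt_sqrt htpos.ne'
    have hst : Real.sqrt t ≠ 0 := (Real.sqrt_pos.mpr htpos).ne'
    have h1 : HasDerivAt (fun t => A * Real.sqrt t + B) (A * (1/(2*Real.sqrt t))) t :=
      (hs.const_mul A).add_const B
    have hsin : HasDerivAt (fun t => Real.sin (A * Real.sqrt t + B))
        (Real.cos (A * Real.sqrt t + B) * (A * (1/(2*Real.sqrt t)))) t :=
      (Real.hasDerivAt_sin _).comp t h1
    have hcos : HasDerivAt (fun t => Real.cos (A * Real.sqrt t + B))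
        (-Real.sin (A * Real.sqrt t + B) * (A * (1/(2*Real.sqrt t)))) t :=
      (Real.hasDerivAt_cos _).comp t h1
    have hmul1 : HasDerivAt (fun t => (2 * Real.sqrt t / A))
        (2 * (1/(2*Real.sqrt t)) / A) t := by
      simpa [mul_div_assoc] using (hs.const_mul 2).div_const A
    have h := (hmul1.mul hsin).add (hcos.const_mul (2 / A^2))
    refine h.congr_deriv ?_
    field_simp
    ring
  have hcont : IntervalIntegrable (fun t => Real.cos (A * Real.sqrt t + B))
      MeasureTheory.volume T (2*T) := by
    apply Continuous.intervalIntegrable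
    fun_prop
  have hint := intervalIntegral.integral_eq_sub_of_hasDerivAt hderiv hcont
  rw [hint]
  set s1 := Real.sqrt T with hs1
  set s2 := Real.sqrt (2*T) with hs2
  have hs1pos : 0 < s1 := Real.sqrt_pos.mpr hT0
  have hs2pos : 0 < s2 := Real.sqrt_pos.mpr (by linarith)
  have hle : s1 ≤ s2 := Real.sqrt_le_sqrt (by linarith)
  have hs2le : s2 ≤ 2 * s1 := by
    rw [hs2, show (2:ℝ)*T = 4*T/2 by ring]
    have : Real.sqrt (4*T/2) ≤ Real.sqrt (4*T) := Real.sqrt_le_sqrt (by linarith)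
    calc Real.sqrt (4*T/2) ≤ Real.sqrt (4*T) := this
      _ = 2 * s1 := by
          rw [show (4:ℝ)*T = (2*s1)^2 by rw [hs1]; rw [mul_pow]; rw [Real.sq_sqrt hT0.le]; ring]
          exact Real.sqrt_sq (by positivity)
  set x1 := A * s1 + B with hx1
  set x2 := A * s2 + B with hx2
  have hcosdiff : |Real.cos x2 - Real.cos x1| ≤ |A| * (s2 - s1) := by
    have habs : |Real.cos x2 - Real.cos x1| ≤ |x2 - x1| := by
      rw [Real.cos_sub_cos]
      calc |-2 * Real.sin ((x2 + x1) / 2) * Real.sin ((x2 - x1) / 2)|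
          = 2 * |Real.sin ((x2 + x1) / 2)| * |Real.sin ((x2 - x1) / 2)| := by
            rw [abs_mul, abs_mul]; norm_num
        _ ≤ 2 * 1 * |(x2 - x1) / 2| := by
            have h1 := Real.abs_sin_le_one ((x2 + x1)/2)
            have h2 : |Real.sin ((x2 - x1) / 2)| ≤ |(x2 - x1) / 2| := Real.abs_sin_le_abs
            nlinarith [abs_nonneg (Real.sin ((x2-x1)/2)), abs_nonneg ((x2-x1)/2),
              abs_nonneg (Real.sin ((x2+x1)/2))]
        _ = |x2 - x1| := by rw [abs_div, abs_two]; ring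
    calc |Real.cos x2 - Real.cos x1| ≤ |x2 - x1| := habs
      _ = |A| * (s2 - s1) := by
          rw [hx2, hx1, show A * s2 + B - (A * s1 + B) = A * (s2 - s1) by ring,
            abs_mul, abs_of_nonneg (sub_nonneg.mpr hle)]
  have hsin1 : |Real.sin x1| ≤ 1 := Real.abs_sin_le_one x1
  have hsin2 : |Real.sin x2| ≤ 1 := Real.abs_sin_le_one x2
  have hA2 : A^2 = |A|^2 := (sq_abs A).symm
  have key : |H (2*T) - H T| ≤ 8 * s1 / |A| := by
    have hexp : H (2*T) - H T
        = ((2 * s2 / A) * Real.sin x2 - (2 * s1 / A) * Real.sin x1)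
          + (2 / A^2) * (Real.cos x2 - Real.cos x1) := by
      simp only [hH]; ring
    rw [hexp]
    have t1 : |(2 * s2 / A) * Real.sin x2| ≤ 2 * s2 / |A| := by
      rw [abs_mul, abs_div, abs_of_nonneg (by positivity : (0:ℝ) ≤ 2 * s2)]
      calc 2 * s2 / |A| * |Real.sin x2| ≤ 2 * s2 / |A| * 1 := by
            apply mul_le_mul_of_nonneg_left hsin2 (by positivity)
        _ = 2 * s2 / |A| := by ring
    have t2 : |(2 * s1 / A) * Real.sin x1| ≤ 2 * s1 / |A| := by
      rw [abs_mul, abs_div, abs_of_nonneg (by positivity : (0:ℝ) ≤ 2 * s1)]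
      calc 2 * s1 / |A| * |Real.sin x1| ≤ 2 * s1 / |A| * 1 := by
            apply mul_le_mul_of_nonneg_left hsin1 (by positivity)
        _ = 2 * s1 / |A| := by ring
    have t3 : |(2 / A^2) * (Real.cos x2 - Real.cos x1)| ≤ 2 * (s2 - s1) / |A| := by
      rw [abs_mul, abs_div, abs_of_nonneg (by norm_num : (0:ℝ) ≤ 2),
        abs_of_nonneg (by positivity : (0:ℝ) ≤ A^2)]
      calc 2 / A^2 * |Real.cos x2 - Real.cos x1| ≤ 2 / A^2 * (|A| * (s2 - s1)) := by
            apply mul_le_mul_of_nonneg_left hcosdiff (by positivity)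
        _ = 2 * (s2 - s1) / |A| := by
            field_simp
            linear_combination (s2 - s1) * (sq_abs A)
    calc |((2 * s2 / A) * Real.sin x2 - (2 * s1 / A) * Real.sin x1)
          + (2 / A^2) * (Real.cos x2 - Real.cos x1)|
        ≤ |(2 * s2 / A) * Real.sin x2 - (2 * s1 / A) * Real.sin x1|
          + |(2 / A^2) * (Real.cos x2 - Real.cos x1)| := abs_add_le _ _
      _ ≤ (|(2 * s2 / A) * Real.sin x2| + |(2 * s1 / A) * Real.sin x1|)
          + |(2 / A^2) * (Real.cos x2 - Real.cos x1)| := by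
            gcongr; exact abs_sub _ _
      _ ≤ (2 * s2 / |A| + 2 * s1 / |A|) + 2 * (s2 - s1) / |A| := by gcongr
      _ = (4 * s2) / |A| := by field_simp; ring
      _ ≤ 8 * s1 / |A| := by
            gcongr ?_ / |A|
            linarith
  calc |H (2*T) - H T| ≤ 8 * s1 / |A| := key
    _ = 8 * Real.sqrt T / |A| := by rw [hs1]
end

section
/- For natural numbers n_1, n_2, n_3 ≥ 1, if √n_1 + (-1)^{i_1}√n_2 + (-1)^{i_2}√n_3 ≠ 0 for some choice of i_1, i_2 ∈ {0,1}, then |√n_1 + (-1)^{i_1}√n_2 + (-1)^{i_2}√n_3| ≥ c · max(n_1, n_2, n_3)^{-3/2} for some absolute constant c > 0. -/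
set_option maxHeartbeats 1000000

lemma sqrt3_master (a b c t : ℝ) (x y z : ℕ)
    (ha : a^2 = (x:ℝ)) (hb : b^2 = (y:ℝ)) (hc : c^2 = (z:ℝ))
    (ha1 : 1 ≤ a) (hb1 : 1 ≤ b) (hc1 : 1 ≤ c)
    (hat : a ≤ t) (hbt : b ≤ t) (hct : c ≤ t)
    (s₂ s₃ : ℝ) (hs₂ : s₂ = 1 ∨ s₂ = -1) (hs₃ : s₃ = 1 ∨ s₃ = -1)
    (hS : a + s₂*b + s₃*c ≠ 0) :
    1/27 * (t^3)⁻¹ ≤ |a + s₂*b + s₃*c| := by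
  have ht : 1 ≤ t := le_trans ha1 hat
  have ht0 : 0 < t := by linarith
  have ht3 : 1 ≤ t^3 := by nlinarith [mul_nonneg (mul_nonneg (sub_nonneg.mpr ht) ht0.le) ht0.le, mul_nonneg (sub_nonneg.mpr ht) ht0.le]
  have ht3pos : 0 < t^3 := by positivity
  have hcancel : (t^3)⁻¹ * t^3 = 1 := inv_mul_cancel₀ ht3pos.ne'
  have hinvpos : 0 < (t^3)⁻¹ := by positivity
  have hinv : (t^3)⁻¹ ≤ 1 := by nlinarith
  by_cases hP : ((x:ℤ) + y - z)^2 - 4*x*y = 0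
  · -- degenerate case: some conjugate vanishes
    have hrealP : ((x:ℝ) + y - z)^2 - 4*(x:ℝ)*y = 0 := by
      have := congrArg (Int.cast : ℤ → ℝ) hP
      push_cast at this
      linarith
    rw [← ha, ← hb, ← hc] at hrealP
    have hfac : (a+b+c)*((a+b-c)*((a-b+c)*(a-b-c))) = 0 := by linear_combination hrealP
    rcases mul_eq_zero.mp hfac with h | h
    · linarith
    have h3 : a+b-c = 0 ∨ a-b+c = 0 ∨ a-b-c = 0 := by
      rcases mul_eq_zero.mp h with h | h
      · exact Or.inl h
      · rcases mul_eq_zero.mp h with h | h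
        exacts [Or.inr (Or.inl h), Or.inr (Or.inr h)]
    rw [le_abs]
    rcases h3 with h | h | h <;> rcases hs₂ with rfl | rfl <;> rcases hs₃ with rfl | rfl <;>
      first
        | exact absurd (by linarith) hS
        | exact Or.inl (by linarith)
        | exact Or.inr (by linarith)
  · -- main case: the full norm is a nonzero integer
    have hint : (1:ℤ) ≤ |((x:ℤ) + y - z)^2 - 4*x*y| := Int.one_le_abs hP
    have hre : (1:ℝ) ≤ |((x:ℝ) + y - z)^2 - 4*(x:ℝ)*y| := by
      exact_mod_cast hint
    have hprod : (a+s₂*b+s₃*c) * ((a+s₂*b-s₃*c)*((a-s₂*b+s₃*c)*(a-s₂*b-s₃*c)))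
        = ((x:ℝ) + y - z)^2 - 4*(x:ℝ)*y := by
      rw [← ha, ← hb, ← hc]
      rcases hs₂ with rfl | rfl <;> rcases hs₃ with rfl | rfl <;> ring
    have hb2 : |a+s₂*b-s₃*c| ≤ 3*t := by
      rcases hs₂ with rfl | rfl <;> rcases hs₃ with rfl | rfl <;> rw [abs_le] <;>
        constructor <;> linarith
    have hb3 : |a-s₂*b+s₃*c| ≤ 3*t := by
      rcases hs₂ with rfl | rfl <;> rcases hs₃ with rfl | rfl <;> rw [abs_le] <;>
        constructor <;> linarith
    have hb4 : |a-s₂*b-s₃*c| ≤ 3*t := by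
      rcases hs₂ with rfl | rfl <;> rcases hs₃ with rfl | rfl <;> rw [abs_le] <;>
        constructor <;> linarith
    have h34 : |a-s₂*b+s₃*c| * |a-s₂*b-s₃*c| ≤ 9*t^2 := by
      nlinarith [abs_nonneg (a-s₂*b+s₃*c), abs_nonneg (a-s₂*b-s₃*c)]
    have h234 : |a+s₂*b-s₃*c| * (|a-s₂*b+s₃*c| * |a-s₂*b-s₃*c|) ≤ 27*t^3 := by
      nlinarith [abs_nonneg (a+s₂*b-s₃*c),
        mul_nonneg (abs_nonneg (a-s₂*b+s₃*c)) (abs_nonneg (a-s₂*b-s₃*c))]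
    have h1 : 1 ≤ |a+s₂*b+s₃*c| * (|a+s₂*b-s₃*c| * (|a-s₂*b+s₃*c| * |a-s₂*b-s₃*c|)) := by
      rw [← abs_mul, ← abs_mul, ← abs_mul, hprod]
      exact hre
    have h2 : |a+s₂*b+s₃*c| * (|a+s₂*b-s₃*c| * (|a-s₂*b+s₃*c| * |a-s₂*b-s₃*c|))
        ≤ |a+s₂*b+s₃*c| * (27*t^3) := by
      exact mul_le_mul_of_nonneg_left h234 (abs_nonneg _)
    have h3 : 1 ≤ |a+s₂*b+s₃*c| * (27*t^3) := le_trans h1 h2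
    nlinarith [abs_nonneg (a+s₂*b+s₃*c)]

/-- Case `k = 3`: a nonvanishing signed sum of square roots of positive integers is
bounded below by `c · max(n₁,n₂,n₃)^{-3/2}`. -/
theorem stmt_3 :
    ∃ c > 0, ∀ (n₁ n₂ n₃ : ℕ), 1 ≤ n₁ → 1 ≤ n₂ → 1 ≤ n₃ → ∀ (i₁ i₂ : Bool),
      Real.sqrt n₁ + (if i₁ then (-1:ℝ) else 1) * Real.sqrt n₂
        + (if i₂ then (-1:ℝ) else 1) * Real.sqrt n₃ ≠ 0 →
      |Real.sqrt n₁ + (if i₁ then (-1:ℝ) else 1) * Real.sqrt n₂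
        + (if i₂ then (-1:ℝ) else 1) * Real.sqrt n₃|
        ≥ c * ((max n₁ (max n₂ n₃) : ℕ) : ℝ) ^ (-(3:ℝ)/2) := by
  refine ⟨1/27, by norm_num, ?_⟩
  intro n₁ n₂ n₃ h1 h2 h3 i₁ i₂ hS
  set N : ℕ := max n₁ (max n₂ n₃) with hN
  have hN1 : 1 ≤ N := le_trans h1 (le_max_left _ _)
  have hN0 : (0:ℝ) < (N:ℝ) := by exact_mod_cast hN1
  set t : ℝ := Real.sqrt (N:ℝ) with htdef
  have hpow : ((N:ℕ):ℝ) ^ (-(3:ℝ)/2) = (t^3)⁻¹ := by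
    have h1' : t^3 = (N:ℝ) ^ ((3:ℝ)/2) := by
      rw [htdef, Real.sqrt_eq_rpow, ← Real.rpow_natCast ((N:ℝ) ^ ((1:ℝ)/2)) 3,
        ← Real.rpow_mul hN0.le]
      norm_num
    rw [neg_div, Real.rpow_neg hN0.le, h1']
  have hsq : ∀ m : ℕ, 1 ≤ m → m ≤ N →
      Real.sqrt m ^ 2 = (m:ℝ) ∧ 1 ≤ Real.sqrt m ∧ Real.sqrt m ≤ t := by
    intro m hm hmN
    refine ⟨Real.sq_sqrt (by positivity), ?_, ?_⟩
    · rw [show (1:ℝ) = Real.sqrt 1 by rw [Real.sqrt_one]]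
      exact Real.sqrt_le_sqrt (by exact_mod_cast hm)
    · exact Real.sqrt_le_sqrt (by exact_mod_cast hmN)
  obtain ⟨ha, ha1, hat⟩ := hsq n₁ h1 (le_max_left _ _)
  obtain ⟨hbq, hb1, hbt⟩ := hsq n₂ h2 (le_trans (le_max_left _ _) (le_max_right _ _))
  obtain ⟨hcq, hc1, hct⟩ := hsq n₃ h3 (le_trans (le_max_right _ _) (le_max_right _ _))
  have hs₂ : (if i₁ then (-1:ℝ) else 1) = 1 ∨ (if i₁ then (-1:ℝ) else 1) = -1 := by
    cases i₁ <;> simp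
  have hs₃ : (if i₂ then (-1:ℝ) else 1) = 1 ∨ (if i₂ then (-1:ℝ) else 1) = -1 := by
    cases i₂ <;> simp
  rw [ge_iff_le, hpow]
  exact sqrt3_master _ _ _ t n₁ n₂ n₃ ha hbq hcq ha1 hb1 hc1 hat hbt hct _ _ hs₂ hs₃ hS
end

section
/- For natural numbers n_1, n_2, n_3, n_4 ≥ 1 and signs i_1, i_2, i_3 ∈ {0,1}, if √n_1 + (-1)^{i_1}√n_2 + (-1)^{i_2}√n_3 + (-1)^{i_3}√n_4 ≠ 0, then its absolute value is at least c · max(n_1,n_2,n_3,n_4)^{-7/2} for some absolute constant c > 0. -/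
namespace T4

/-- sqrt of a positive natural is ≥ 1 -/
lemma one_le_sqrt {n : ℕ} (h : 1 ≤ n) : 1 ≤ Real.sqrt n := by
  rw [show (1:ℝ) = Real.sqrt 1 by simp]
  exact Real.sqrt_le_sqrt (by exact_mod_cast h)

lemma sqrt_le_sqrtN {n N : ℕ} (h : n ≤ N) : Real.sqrt n ≤ Real.sqrt N :=
  Real.sqrt_le_sqrt (by exact_mod_cast h)

/-- difference of square roots of distinct naturals -/
lemma diffsqrt (c d N : ℕ) (hcN : c ≤ N) (hdN : d ≤ N) (hN : 1 ≤ N)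
    (hne : c ≠ d) : 1 / (2 * Real.sqrt N) ≤ |Real.sqrt c - Real.sqrt d| := by
  have hC := Real.sqrt_nonneg (c:ℝ)
  have hD := Real.sqrt_nonneg (d:ℝ)
  have hNpos : (0:ℝ) < Real.sqrt N := lt_of_lt_of_le one_pos (one_le_sqrt hN)
  have hC2 : Real.sqrt c ^ 2 = (c:ℝ) := Real.sq_sqrt (by positivity)
  have hD2 : Real.sqrt d ^ 2 = (d:ℝ) := Real.sq_sqrt (by positivity)
  have h1 : (1:ℝ) ≤ |(c:ℝ) - d| := by
    have : (c:ℤ) ≠ (d:ℤ) := by exact_mod_cast hne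
    have h2 : 1 ≤ |(c:ℤ) - d| := Int.one_le_abs (sub_ne_zero.mpr this)
    exact_mod_cast h2
  have hfac : (c:ℝ) - d = (Real.sqrt c - Real.sqrt d) * (Real.sqrt c + Real.sqrt d) := by
    have h3 : (Real.sqrt c - Real.sqrt d) * (Real.sqrt c + Real.sqrt d)
        = Real.sqrt c ^ 2 - Real.sqrt d ^ 2 := by ring
    rw [h3, hC2, hD2]
  have hsum : Real.sqrt c + Real.sqrt d ≤ 2 * Real.sqrt N := by
    have := sqrt_le_sqrtN hcN; have := sqrt_le_sqrtN hdN; linarith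
  rw [div_le_iff₀ (by positivity)]
  calc (1:ℝ) ≤ |(c:ℝ) - d| := h1
    _ = |Real.sqrt c - Real.sqrt d| * (Real.sqrt c + Real.sqrt d) := by
        rw [hfac, abs_mul, abs_of_nonneg (show (0:ℝ) ≤ Real.sqrt c + Real.sqrt d by linarith)]
    _ ≤ |Real.sqrt c - Real.sqrt d| * (2 * Real.sqrt N) := by
        apply mul_le_mul_of_nonneg_left hsum (abs_nonneg _)

/-- small bound is at most 1 -/
lemma smallbound {N : ℕ} (hN : 1 ≤ N) : 1 / (2 * Real.sqrt N) ≤ 1 := by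
  have h1 := one_le_sqrt hN
  rw [div_le_one (by linarith)]; linarith

/-- two-term reduction: coefficients in {0, ±2} -/
lemma red2 (c d N : ℕ) (hc : 1 ≤ c) (hd : 1 ≤ d) (hcN : c ≤ N) (hdN : d ≤ N)
    (hN : 1 ≤ N) (p q : ℝ) (hp : p = 0 ∨ p = 2 ∨ p = -2) (hq : q = 0 ∨ q = 2 ∨ q = -2)
    (h : p * Real.sqrt c + q * Real.sqrt d ≠ 0) :
    1 / (2 * Real.sqrt N) ≤ |p * Real.sqrt c + q * Real.sqrt d| := by
  have hC1 : 1 ≤ Real.sqrt c := one_le_sqrt hc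
  have hD1 : 1 ≤ Real.sqrt d := one_le_sqrt hd
  have hsb := smallbound hN
  have hNpos : (0:ℝ) < Real.sqrt N := lt_of_lt_of_le one_pos (one_le_sqrt hN)
  have hdiff : c ≠ d → 1 / (2 * Real.sqrt N) ≤ |Real.sqrt c - Real.sqrt d| :=
    fun hne => diffsqrt c d N hcN hdN hN hne
  have habs2 : ∀ x : ℝ, 1 ≤ x → 1 / (2 * Real.sqrt N) ≤ |2 * x| := by
    intro x hx
    rw [abs_of_nonneg (by linarith)]; linarith
  rcases hp with rfl | rfl | rfl <;> rcases hq with rfl | rfl | rfl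
  · simp at h
  · rw [show (0:ℝ) * Real.sqrt c + 2 * Real.sqrt d = 2 * Real.sqrt d by ring]
    exact habs2 _ hD1
  · rw [show (0:ℝ) * Real.sqrt c + -2 * Real.sqrt d = -(2 * Real.sqrt d) by ring, abs_neg]
    exact habs2 _ hD1
  · rw [show (2:ℝ) * Real.sqrt c + 0 * Real.sqrt d = 2 * Real.sqrt c by ring]
    exact habs2 _ hC1
  · rw [show (2:ℝ) * Real.sqrt c + 2 * Real.sqrt d = 2 * (Real.sqrt c + Real.sqrt d) by ring]
    exact habs2 _ (by linarith)
  · have hne : c ≠ d := by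
      rintro rfl; exact h (by ring)
    rw [show (2:ℝ) * Real.sqrt c + -2 * Real.sqrt d = 2 * (Real.sqrt c - Real.sqrt d) by ring,
      abs_mul, abs_of_nonneg (by norm_num : (0:ℝ) ≤ 2)]
    have := hdiff hne
    nlinarith [abs_nonneg (Real.sqrt c - Real.sqrt d)]
  · rw [show (-2:ℝ) * Real.sqrt c + 0 * Real.sqrt d = -(2 * Real.sqrt c) by ring, abs_neg]
    exact habs2 _ hC1
  · have hne : c ≠ d := by
      rintro rfl; exact h (by ring)
    rw [show (-2:ℝ) * Real.sqrt c + 2 * Real.sqrt d = -(2 * (Real.sqrt c - Real.sqrt d)) by ring,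
      abs_neg, abs_mul, abs_of_nonneg (by norm_num : (0:ℝ) ≤ 2)]
    have := hdiff hne
    nlinarith [abs_nonneg (Real.sqrt c - Real.sqrt d)]
  · rw [show (-2:ℝ) * Real.sqrt c + -2 * Real.sqrt d = -(2 * (Real.sqrt c + Real.sqrt d)) by ring,
      abs_neg]
    exact habs2 _ (by linarith)

lemma signdiff (s : ℝ) (hs : s = 1 ∨ s = -1) (δ : ℝ) (hδ : δ = 1 ∨ δ = -1) :
    s - δ = 0 ∨ s - δ = 2 ∨ s - δ = -2 := by
  rcases hs with rfl | rfl <;> rcases hδ with rfl | rfl <;> norm_num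

lemma key4 (S x2 x3 x4 M : ℝ) (hM : 0 < M) (h2 : |x2| ≤ M) (h3 : |x3| ≤ M)
    (h4 : |x4| ≤ M) (h1 : 1 ≤ |S * (x2 * x3 * x4)|) : 1 / M ^ 3 ≤ |S| := by
  rw [abs_mul, abs_mul, abs_mul] at h1
  have hb : |x2| * |x3| * |x4| ≤ M ^ 3 := by
    calc |x2| * |x3| * |x4| ≤ M * M * M := by
          gcongr
      _ = M ^ 3 := by ring
  have hS0 : 0 ≤ |S| := abs_nonneg _
  rw [div_le_iff₀ (by positivity)]
  nlinarith [abs_nonneg x2, abs_nonneg x3, abs_nonneg x4,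
    mul_le_mul_of_nonneg_left hb hS0]

/-- the `k = 3` case with first coefficient `+1` -/
lemma term3 (b c d N : ℕ) (hb : 1 ≤ b) (hc : 1 ≤ c) (hd : 1 ≤ d)
    (hbN : b ≤ N) (hcN : c ≤ N) (hdN : d ≤ N) (hN : 1 ≤ N)
    (s t : ℝ) (hs : s = 1 ∨ s = -1) (ht : t = 1 ∨ t = -1)
    (h : Real.sqrt b + s * Real.sqrt c + t * Real.sqrt d ≠ 0) :
    1 / (27 * Real.sqrt N ^ 3) ≤ |Real.sqrt b + s * Real.sqrt c + t * Real.sqrt d| := by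
  set B := Real.sqrt b with hBdef
  set C := Real.sqrt c with hCdef
  set D := Real.sqrt d with hDdef
  have hB2 : B ^ 2 = (b:ℝ) := Real.sq_sqrt (by positivity)
  have hC2 : C ^ 2 = (c:ℝ) := Real.sq_sqrt (by positivity)
  have hD2 : D ^ 2 = (d:ℝ) := Real.sq_sqrt (by positivity)
  have hB0 : 0 ≤ B := Real.sqrt_nonneg _
  have hC0 : 0 ≤ C := Real.sqrt_nonneg _
  have hD0 : 0 ≤ D := Real.sqrt_nonneg _
  have hBN : B ≤ Real.sqrt N := sqrt_le_sqrtN hbN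
  have hCN : C ≤ Real.sqrt N := sqrt_le_sqrtN hcN
  have hDN : D ≤ Real.sqrt N := sqrt_le_sqrtN hdN
  have h1N : 1 ≤ Real.sqrt N := one_le_sqrt hN
  have hid : (B + C + D) * (B + C - D) * ((B - C + D) * (B - C - D))
      = ((b:ℝ) + c - d) ^ 2 - 4 * b * c := by
    have hpoly : (B + C + D) * (B + C - D) * ((B - C + D) * (B - C - D))
        = (B ^ 2 + C ^ 2 - D ^ 2) ^ 2 - 4 * (B ^ 2) * (C ^ 2) := by ring
    rw [hpoly, hB2, hC2, hD2]
  have hcast : (((((b:ℤ) + c - d) ^ 2 - 4 * b * c : ℤ)) : ℝ)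
      = ((b:ℝ) + c - d) ^ 2 - 4 * b * c := by push_cast; ring
  by_cases hq : (((b:ℤ) + c - d) ^ 2 - 4 * b * c : ℤ) = 0
  · -- some conjugate factor vanishes; reduce to two terms
    have h0 : (B + C + D) * (B + C - D) * ((B - C + D) * (B - C - D)) = 0 := by
      rw [hid, ← hcast, hq, Int.cast_zero]
    have hwk : 1 / (27 * Real.sqrt N ^ 3) ≤ 1 / (2 * Real.sqrt N) := by
      apply one_div_le_one_div_of_le (by positivity)
      nlinarith [sq_nonneg (Real.sqrt N - 1), sq_nonneg (Real.sqrt N + 1), h1N]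
    have main : ∀ δ₂ δ₃ : ℝ, δ₂ = 1 ∨ δ₂ = -1 → δ₃ = 1 ∨ δ₃ = -1 →
        B + δ₂ * C + δ₃ * D = 0 →
        1 / (27 * Real.sqrt N ^ 3) ≤ |B + s * C + t * D| := by
      intro δ₂ δ₃ hδ₂ hδ₃ hF
      have hrw : B + s * C + t * D = (s - δ₂) * C + (t - δ₃) * D := by
        linear_combination hF
      rw [hrw]
      refine le_trans hwk ?_
      exact red2 c d N hc hd hcN hdN hN _ _ (signdiff s hs δ₂ hδ₂)
        (signdiff t ht δ₃ hδ₃) (by rw [← hrw]; exact h)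
    rcases mul_eq_zero.mp h0 with h0' | h0'
    · rcases mul_eq_zero.mp h0' with h0'' | h0''
      · exact main 1 1 (Or.inl rfl) (Or.inl rfl) (by linear_combination h0'')
      · exact main 1 (-1) (Or.inl rfl) (Or.inr rfl) (by linear_combination h0'')
    · rcases mul_eq_zero.mp h0' with h0'' | h0''
      · exact main (-1) 1 (Or.inr rfl) (Or.inl rfl) (by linear_combination h0'')
      · exact main (-1) (-1) (Or.inr rfl) (Or.inr rfl) (by linear_combination h0'')
  · -- the conjugate product is a nonzero integer
    have habs1 : (1:ℝ) ≤ |(B + C + D) * (B + C - D) * ((B - C + D) * (B - C - D))| := by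
      rw [hid, ← hcast]
      exact_mod_cast Int.one_le_abs hq
    have hMpos : (0:ℝ) < 3 * Real.sqrt N := by linarith
    have hf1 : |B + C + D| ≤ 3 * Real.sqrt N := abs_le.mpr ⟨by linarith, by linarith⟩
    have hf2 : |B + C - D| ≤ 3 * Real.sqrt N := abs_le.mpr ⟨by linarith, by linarith⟩
    have hf3 : |B - C + D| ≤ 3 * Real.sqrt N := abs_le.mpr ⟨by linarith, by linarith⟩
    have hf4 : |B - C - D| ≤ 3 * Real.sqrt N := abs_le.mpr ⟨by linarith, by linarith⟩
    have hcube : (1:ℝ) / (27 * Real.sqrt N ^ 3) = 1 / (3 * Real.sqrt N) ^ 3 := by ring_nf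
    rw [hcube]
    rcases hs with rfl | rfl <;> rcases ht with rfl | rfl
    · refine key4 _ _ _ _ _ hMpos hf2 hf3 hf4 ?_
      convert habs1 using 2
      ring
    · refine key4 _ _ _ _ _ hMpos hf1 hf3 hf4 ?_
      convert habs1 using 2
      ring
    · refine key4 _ _ _ _ _ hMpos hf1 hf2 hf4 ?_
      convert habs1 using 2
      ring
    · refine key4 _ _ _ _ _ hMpos hf1 hf2 hf3 ?_
      convert habs1 using 2
      ring

/-- three-term reduction: coefficients in {0, ±2} -/
lemma red3 (b c d N : ℕ) (hb : 1 ≤ b) (hc : 1 ≤ c) (hd : 1 ≤ d)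
    (hbN : b ≤ N) (hcN : c ≤ N) (hdN : d ≤ N) (hN : 1 ≤ N)
    (p q r : ℝ) (hp : p = 0 ∨ p = 2 ∨ p = -2) (hq : q = 0 ∨ q = 2 ∨ q = -2)
    (hr : r = 0 ∨ r = 2 ∨ r = -2)
    (h : p * Real.sqrt b + q * Real.sqrt c + r * Real.sqrt d ≠ 0) :
    1 / (27 * Real.sqrt N ^ 3) ≤ |p * Real.sqrt b + q * Real.sqrt c + r * Real.sqrt d| := by
  have h1N : 1 ≤ Real.sqrt N := one_le_sqrt hN
  have hB1 : 1 ≤ Real.sqrt b := one_le_sqrt hb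
  have hC1 : 1 ≤ Real.sqrt c := one_le_sqrt hc
  have hD1 : 1 ≤ Real.sqrt d := one_le_sqrt hd
  have hBND1 : 1 / (27 * Real.sqrt N ^ 3) ≤ 1 := by
    rw [div_le_one (by positivity)]
    nlinarith [sq_nonneg (Real.sqrt N - 1), sq_nonneg (Real.sqrt N + 1)]
  have hwk2 : 1 / (27 * Real.sqrt N ^ 3) ≤ 1 / (2 * Real.sqrt N) := by
    apply one_div_le_one_div_of_le (by positivity)
    nlinarith [sq_nonneg (Real.sqrt N - 1), sq_nonneg (Real.sqrt N + 1), h1N]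
  have habs2 : ∀ x : ℝ, 1 ≤ x → 1 / (27 * Real.sqrt N ^ 3) ≤ |2 * x| := by
    intro x hx
    rw [abs_of_nonneg (by linarith)]; linarith
  have hdiffcase : ∀ x y : ℕ, x ≤ N → y ≤ N → x ≠ y →
      1 / (27 * Real.sqrt N ^ 3) ≤ |2 * (Real.sqrt x - Real.sqrt y)| := by
    intro x y hxN hyN hxy
    rw [abs_mul, abs_of_nonneg (by norm_num : (0:ℝ) ≤ 2)]
    have hds := diffsqrt x y N hxN hyN hN hxy
    have := abs_nonneg (Real.sqrt x - Real.sqrt y)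
    linarith
  have main : ∀ q r : ℝ, (q = 0 ∨ q = 2 ∨ q = -2) → (r = 0 ∨ r = 2 ∨ r = -2) →
      (2 * Real.sqrt b + q * Real.sqrt c + r * Real.sqrt d ≠ 0) →
      1 / (27 * Real.sqrt N ^ 3) ≤ |2 * Real.sqrt b + q * Real.sqrt c + r * Real.sqrt d| := by
    intro q r hq hr h
    have hterm3 : ∀ s t : ℝ, s = 1 ∨ s = -1 → t = 1 ∨ t = -1 →
        2 * Real.sqrt b + 2 * s * Real.sqrt c + 2 * t * Real.sqrt d ≠ 0 →
        1 / (27 * Real.sqrt N ^ 3)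
          ≤ |2 * Real.sqrt b + 2 * s * Real.sqrt c + 2 * t * Real.sqrt d| := by
      intro s t hs ht hne
      have hrw : 2 * Real.sqrt b + 2 * s * Real.sqrt c + 2 * t * Real.sqrt d
          = 2 * (Real.sqrt b + s * Real.sqrt c + t * Real.sqrt d) := by ring
      rw [hrw] at hne ⊢
      have hinner : Real.sqrt b + s * Real.sqrt c + t * Real.sqrt d ≠ 0 := by
        intro h0; exact hne (by rw [h0]; ring)
      have ht3 := term3 b c d N hb hc hd hbN hcN hdN hN s t hs ht hinner
      rw [abs_mul, abs_of_nonneg (by norm_num : (0:ℝ) ≤ 2)]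
      have := abs_nonneg (Real.sqrt b + s * Real.sqrt c + t * Real.sqrt d)
      linarith
    rcases hq with rfl | rfl | rfl <;> rcases hr with rfl | rfl | rfl
    · rw [show 2 * Real.sqrt b + 0 * Real.sqrt c + 0 * Real.sqrt d = 2 * Real.sqrt b by ring]
      exact habs2 _ hB1
    · rw [show 2 * Real.sqrt b + 0 * Real.sqrt c + 2 * Real.sqrt d
        = 2 * (Real.sqrt b + Real.sqrt d) by ring]
      exact habs2 _ (by linarith)
    · have hbd : b ≠ d := by rintro rfl; exact h (by ring)
      rw [show 2 * Real.sqrt b + 0 * Real.sqrt c + -2 * Real.sqrt d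
        = 2 * (Real.sqrt b - Real.sqrt d) by ring]
      exact hdiffcase b d hbN hdN hbd
    · rw [show 2 * Real.sqrt b + 2 * Real.sqrt c + 0 * Real.sqrt d
        = 2 * (Real.sqrt b + Real.sqrt c) by ring]
      exact habs2 _ (by linarith)
    · have hres := hterm3 1 1 (Or.inl rfl) (Or.inl rfl)
        (by intro h0; exact h (by linear_combination h0))
      convert hres using 2; ring
    · have hres := hterm3 1 (-1) (Or.inl rfl) (Or.inr rfl)
        (by intro h0; exact h (by linear_combination h0))
      convert hres using 2; ring
    · have hbc : b ≠ c := by rintro rfl; exact h (by ring)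
      rw [show 2 * Real.sqrt b + -2 * Real.sqrt c + 0 * Real.sqrt d
        = 2 * (Real.sqrt b - Real.sqrt c) by ring]
      exact hdiffcase b c hbN hcN hbc
    · have hres := hterm3 (-1) 1 (Or.inr rfl) (Or.inl rfl)
        (by intro h0; exact h (by linear_combination h0))
      convert hres using 2; ring
    · have hres := hterm3 (-1) (-1) (Or.inr rfl) (Or.inr rfl)
        (by intro h0; exact h (by linear_combination h0))
      convert hres using 2; ring
  have hneg : ∀ x : ℝ, (x = 0 ∨ x = 2 ∨ x = -2) → (-x = 0 ∨ -x = 2 ∨ -x = -2) := by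
    rintro x (rfl | rfl | rfl) <;> norm_num
  rcases hp with rfl | rfl | rfl
  · rw [show 0 * Real.sqrt b + q * Real.sqrt c + r * Real.sqrt d
      = q * Real.sqrt c + r * Real.sqrt d by ring] at h ⊢
    exact le_trans hwk2 (red2 c d N hc hd hcN hdN hN q r hq hr h)
  · exact main q r hq hr h
  · rw [show (-2) * Real.sqrt b + q * Real.sqrt c + r * Real.sqrt d
      = -(2 * Real.sqrt b + (-q) * Real.sqrt c + (-r) * Real.sqrt d) by ring] at h ⊢
    rw [abs_neg]
    exact main (-q) (-r) (hneg q hq) (hneg r hr) (neg_ne_zero.mp h)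

lemma key8 (S x2 x3 x4 x5 x6 x7 x8 M : ℝ) (hM : 0 < M)
    (h2 : |x2| ≤ M) (h3 : |x3| ≤ M) (h4 : |x4| ≤ M) (h5 : |x5| ≤ M)
    (h6 : |x6| ≤ M) (h7 : |x7| ≤ M) (h8 : |x8| ≤ M)
    (h1 : 1 ≤ |S * (x2 * x3 * x4 * x5 * x6 * x7 * x8)|) : 1 / M ^ 7 ≤ |S| := by
  rw [abs_mul, abs_mul, abs_mul, abs_mul, abs_mul, abs_mul, abs_mul] at h1
  have hb : |x2| * |x3| * |x4| * |x5| * |x6| * |x7| * |x8| ≤ M ^ 7 := by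
    calc |x2| * |x3| * |x4| * |x5| * |x6| * |x7| * |x8|
        ≤ M * M * M * M * M * M * M := by gcongr
      _ = M ^ 7 := by ring
  have hS0 : 0 ≤ |S| := abs_nonneg _
  rw [div_le_iff₀ (by positivity)]
  nlinarith [mul_le_mul_of_nonneg_left hb hS0]

set_option maxHeartbeats 1000000 in
/-- the `k = 4` case with first coefficient `+1` -/
lemma term4 (a b c d N : ℕ) (ha : 1 ≤ a) (hb : 1 ≤ b) (hc : 1 ≤ c) (hd : 1 ≤ d)
    (haN : a ≤ N) (hbN : b ≤ N) (hcN : c ≤ N) (hdN : d ≤ N) (hN : 1 ≤ N)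
    (s t u : ℝ) (hs : s = 1 ∨ s = -1) (ht : t = 1 ∨ t = -1) (hu : u = 1 ∨ u = -1)
    (h : Real.sqrt a + s * Real.sqrt b + t * Real.sqrt c + u * Real.sqrt d ≠ 0) :
    1 / (16384 * Real.sqrt N ^ 7)
      ≤ |Real.sqrt a + s * Real.sqrt b + t * Real.sqrt c + u * Real.sqrt d| := by
  set A := Real.sqrt a with hAdef
  set B := Real.sqrt b with hBdef
  set C := Real.sqrt c with hCdef
  set D := Real.sqrt d with hDdef
  have hA2 : A ^ 2 = (a:ℝ) := Real.sq_sqrt (by positivity)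
  have hB2 : B ^ 2 = (b:ℝ) := Real.sq_sqrt (by positivity)
  have hC2 : C ^ 2 = (c:ℝ) := Real.sq_sqrt (by positivity)
  have hD2 : D ^ 2 = (d:ℝ) := Real.sq_sqrt (by positivity)
  have hA0 : 0 ≤ A := Real.sqrt_nonneg _
  have hB0 : 0 ≤ B := Real.sqrt_nonneg _
  have hC0 : 0 ≤ C := Real.sqrt_nonneg _
  have hD0 : 0 ≤ D := Real.sqrt_nonneg _
  have hAN : A ≤ Real.sqrt N := sqrt_le_sqrtN haN
  have hBN : B ≤ Real.sqrt N := sqrt_le_sqrtN hbN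
  have hCN : C ≤ Real.sqrt N := sqrt_le_sqrtN hcN
  have hDN : D ≤ Real.sqrt N := sqrt_le_sqrtN hdN
  have h1N : 1 ≤ Real.sqrt N := one_le_sqrt hN
  have hid : (A + B + C + D) * (A + B + C - D) * (A + B - C + D) * (A + B - C - D)
        * (A - B + C + D) * (A - B + C - D) * (A - B - C + D) * (A - B - C - D)
      = (((a:ℝ) + b + c - d) ^ 2 + 4 * a * b - 4 * a * c - 4 * b * c) ^ 2
        - 4 * a * b * (2 * ((a:ℝ) + b + c - d) - 4 * c) ^ 2 := by
    rw [← hA2, ← hB2, ← hC2, ← hD2]; ring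
  have hcast : ((((((a:ℤ) + b + c - d) ^ 2 + 4 * a * b - 4 * a * c - 4 * b * c) ^ 2
        - 4 * a * b * (2 * ((a:ℤ) + b + c - d) - 4 * c) ^ 2 : ℤ)) : ℝ)
      = (((a:ℝ) + b + c - d) ^ 2 + 4 * a * b - 4 * a * c - 4 * b * c) ^ 2
        - 4 * a * b * (2 * ((a:ℝ) + b + c - d) - 4 * c) ^ 2 := by push_cast; ring
  by_cases hq : ((((a:ℤ) + b + c - d) ^ 2 + 4 * a * b - 4 * a * c - 4 * b * c) ^ 2
      - 4 * a * b * (2 * ((a:ℤ) + b + c - d) - 4 * c) ^ 2 : ℤ) = 0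
  · -- some conjugate factor vanishes; reduce to at most three terms
    have h0 : (A + B + C + D) * (A + B + C - D) * (A + B - C + D) * (A + B - C - D)
        * (A - B + C + D) * (A - B + C - D) * (A - B - C + D) * (A - B - C - D) = 0 := by
      rw [hid, ← hcast, hq, Int.cast_zero]
    have hwk : 1 / (16384 * Real.sqrt N ^ 7) ≤ 1 / (27 * Real.sqrt N ^ 3) := by
      apply one_div_le_one_div_of_le (by positivity)
      have hpw : Real.sqrt N ^ 3 ≤ Real.sqrt N ^ 7 :=
        pow_le_pow_right₀ h1N (by norm_num)
      have : (0:ℝ) ≤ Real.sqrt N ^ 7 := by positivity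
      linarith
    have main : ∀ δ₂ δ₃ δ₄ : ℝ, δ₂ = 1 ∨ δ₂ = -1 → δ₃ = 1 ∨ δ₃ = -1 →
        δ₄ = 1 ∨ δ₄ = -1 → A + δ₂ * B + δ₃ * C + δ₄ * D = 0 →
        1 / (16384 * Real.sqrt N ^ 7) ≤ |A + s * B + t * C + u * D| := by
      intro δ₂ δ₃ δ₄ hδ₂ hδ₃ hδ₄ hF
      have hrw : A + s * B + t * C + u * D
          = (s - δ₂) * B + (t - δ₃) * C + (u - δ₄) * D := by linear_combination hF
      rw [hrw]
      refine le_trans hwk ?_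
      exact red3 b c d N hb hc hd hbN hcN hdN hN _ _ _ (signdiff s hs δ₂ hδ₂)
        (signdiff t ht δ₃ hδ₃) (signdiff u hu δ₄ hδ₄) (by rw [← hrw]; exact h)
    rcases mul_eq_zero.mp h0 with h0' | h0'
    rcases mul_eq_zero.mp h0' with h0' | h0'
    rcases mul_eq_zero.mp h0' with h0' | h0'
    rcases mul_eq_zero.mp h0' with h0' | h0'
    rcases mul_eq_zero.mp h0' with h0' | h0'
    rcases mul_eq_zero.mp h0' with h0' | h0'
    rcases mul_eq_zero.mp h0' with h0' | h0'
    · exact main 1 1 1 (Or.inl rfl) (Or.inl rfl) (Or.inl rfl) (by linear_combination h0')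
    · exact main 1 1 (-1) (Or.inl rfl) (Or.inl rfl) (Or.inr rfl) (by linear_combination h0')
    · exact main 1 (-1) 1 (Or.inl rfl) (Or.inr rfl) (Or.inl rfl) (by linear_combination h0')
    · exact main 1 (-1) (-1) (Or.inl rfl) (Or.inr rfl) (Or.inr rfl) (by linear_combination h0')
    · exact main (-1) 1 1 (Or.inr rfl) (Or.inl rfl) (Or.inl rfl) (by linear_combination h0')
    · exact main (-1) 1 (-1) (Or.inr rfl) (Or.inl rfl) (Or.inr rfl) (by linear_combination h0')
    · exact main (-1) (-1) 1 (Or.inr rfl) (Or.inr rfl) (Or.inl rfl) (by linear_combination h0')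
    · exact main (-1) (-1) (-1) (Or.inr rfl) (Or.inr rfl) (Or.inr rfl) (by linear_combination h0')
  · -- the conjugate product is a nonzero integer
    have habs1 : (1:ℝ) ≤ |(A + B + C + D) * (A + B + C - D) * (A + B - C + D)
        * (A + B - C - D) * (A - B + C + D) * (A - B + C - D) * (A - B - C + D)
        * (A - B - C - D)| := by
      rw [hid, ← hcast]
      exact_mod_cast Int.one_le_abs hq
    have hMpos : (0:ℝ) < 4 * Real.sqrt N := by linarith
    have hf1 : |A + B + C + D| ≤ 4 * Real.sqrt N := abs_le.mpr ⟨by linarith, by linarith⟩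
    have hf2 : |A + B + C - D| ≤ 4 * Real.sqrt N := abs_le.mpr ⟨by linarith, by linarith⟩
    have hf3 : |A + B - C + D| ≤ 4 * Real.sqrt N := abs_le.mpr ⟨by linarith, by linarith⟩
    have hf4 : |A + B - C - D| ≤ 4 * Real.sqrt N := abs_le.mpr ⟨by linarith, by linarith⟩
    have hf5 : |A - B + C + D| ≤ 4 * Real.sqrt N := abs_le.mpr ⟨by linarith, by linarith⟩
    have hf6 : |A - B + C - D| ≤ 4 * Real.sqrt N := abs_le.mpr ⟨by linarith, by linarith⟩
    have hf7 : |A - B - C + D| ≤ 4 * Real.sqrt N := abs_le.mpr ⟨by linarith, by linarith⟩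
    have hf8 : |A - B - C - D| ≤ 4 * Real.sqrt N := abs_le.mpr ⟨by linarith, by linarith⟩
    rw [show (1:ℝ) / (16384 * Real.sqrt N ^ 7) = 1 / (4 * Real.sqrt N) ^ 7 by
      rw [mul_pow]; norm_num]
    rcases hs with rfl | rfl <;> rcases ht with rfl | rfl <;> rcases hu with rfl | rfl
    · refine key8 _ _ _ _ _ _ _ _ _ hMpos hf2 hf3 hf4 hf5 hf6 hf7 hf8 ?_
      convert habs1 using 2; ring
    · refine key8 _ _ _ _ _ _ _ _ _ hMpos hf1 hf3 hf4 hf5 hf6 hf7 hf8 ?_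
      convert habs1 using 2; ring
    · refine key8 _ _ _ _ _ _ _ _ _ hMpos hf1 hf2 hf4 hf5 hf6 hf7 hf8 ?_
      convert habs1 using 2; ring
    · refine key8 _ _ _ _ _ _ _ _ _ hMpos hf1 hf2 hf3 hf5 hf6 hf7 hf8 ?_
      convert habs1 using 2; ring
    · refine key8 _ _ _ _ _ _ _ _ _ hMpos hf1 hf2 hf3 hf4 hf6 hf7 hf8 ?_
      convert habs1 using 2; ring
    · refine key8 _ _ _ _ _ _ _ _ _ hMpos hf1 hf2 hf3 hf4 hf5 hf7 hf8 ?_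
      convert habs1 using 2; ring
    · refine key8 _ _ _ _ _ _ _ _ _ hMpos hf1 hf2 hf3 hf4 hf5 hf6 hf8 ?_
      convert habs1 using 2; ring
    · refine key8 _ _ _ _ _ _ _ _ _ hMpos hf1 hf2 hf3 hf4 hf5 hf6 hf7 ?_
      convert habs1 using 2; ring

end T4


/-- Case `k = 4`: a nonvanishing signed sum of square roots of positive integers is
bounded below by `c · max(n₁,n₂,n₃,n₄)^{-7/2}`. -/
theorem stmt_4 :
    ∃ c > 0, ∀ (n₁ n₂ n₃ n₄ : ℕ), 1 ≤ n₁ → 1 ≤ n₂ → 1 ≤ n₃ → 1 ≤ n₄ →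
      ∀ (i₁ i₂ i₃ : Bool),
      Real.sqrt n₁ + (if i₁ then (-1:ℝ) else 1) * Real.sqrt n₂
        + (if i₂ then (-1:ℝ) else 1) * Real.sqrt n₃
        + (if i₃ then (-1:ℝ) else 1) * Real.sqrt n₄ ≠ 0 →
      |Real.sqrt n₁ + (if i₁ then (-1:ℝ) else 1) * Real.sqrt n₂
        + (if i₂ then (-1:ℝ) else 1) * Real.sqrt n₃
        + (if i₃ then (-1:ℝ) else 1) * Real.sqrt n₄|
        ≥ c * ((max n₁ (max n₂ (max n₃ n₄)) : ℕ) : ℝ) ^ (-(7:ℝ)/2) := by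
  refine ⟨(16384:ℝ)⁻¹, by norm_num, ?_⟩
  intro n₁ n₂ n₃ n₄ h₁ h₂ h₃ h₄ i₁ i₂ i₃ hne
  set N := max n₁ (max n₂ (max n₃ n₄)) with hNdef
  have h1N : 1 ≤ N := le_trans h₁ (le_max_left _ _)
  have hn1 : n₁ ≤ N := le_max_left _ _
  have hn2 : n₂ ≤ N := le_trans (le_max_left _ _) (le_max_right _ _)
  have hn3 : n₃ ≤ N :=
    le_trans (le_trans (le_max_left _ _) (le_max_right _ _)) (le_max_right _ _)
  have hn4 : n₄ ≤ N :=
    le_trans (le_trans (le_max_right _ _) (le_max_right _ _)) (le_max_right _ _)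
  have hs : (if i₁ then (-1:ℝ) else 1) = 1 ∨ (if i₁ then (-1:ℝ) else 1) = -1 := by
    cases i₁ <;> simp
  have ht : (if i₂ then (-1:ℝ) else 1) = 1 ∨ (if i₂ then (-1:ℝ) else 1) = -1 := by
    cases i₂ <;> simp
  have hu : (if i₃ then (-1:ℝ) else 1) = 1 ∨ (if i₃ then (-1:ℝ) else 1) = -1 := by
    cases i₃ <;> simp
  have key : (1:ℝ) / (16384 * Real.sqrt N ^ 7)
      ≤ |Real.sqrt n₁ + (if i₁ then (-1:ℝ) else 1) * Real.sqrt n₂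
        + (if i₂ then (-1:ℝ) else 1) * Real.sqrt n₃
        + (if i₃ then (-1:ℝ) else 1) * Real.sqrt n₄| :=
    T4.term4 n₁ n₂ n₃ n₄ N h₁ h₂ h₃ h₄ hn1 hn2 hn3 hn4 h1N _ _ _ hs ht hu hne
  rw [ge_iff_le]
  have h0 : (0:ℝ) ≤ (N:ℝ) := Nat.cast_nonneg _
  have hrpow : ((N:ℕ):ℝ) ^ (-(7:ℝ)/2) = (Real.sqrt N ^ 7)⁻¹ := by
    rw [show (-(7:ℝ)/2) = -((7:ℝ)/2) by ring, Real.rpow_neg h0]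
    congr 1
    rw [show ((7:ℝ)/2) = (1/2:ℝ) * 7 by norm_num, Real.rpow_mul h0,
      ← Real.sqrt_eq_rpow, ← Real.rpow_natCast (Real.sqrt N) 7]
    norm_num
  calc (16384:ℝ)⁻¹ * ((N:ℕ):ℝ) ^ (-(7:ℝ)/2) = 1 / (16384 * Real.sqrt N ^ 7) := by
        rw [hrpow]; ring
    _ ≤ _ := key
end

section
/- Let k ≥ 3, N_1, …, N_k > 1, E = max(N_1,…,N_k), and 0 < Δ ≤ C·E^{1/2}. Let A denote the number of k-tuples (n_1,…,n_k) with N_j < n_j ≤ 2N_j for all j satisfying |√n_1 + (-1)^{i_1}√n_2 + ⋯ + (-1)^{i_{k-1}}√n_k| < Δ, for a fixed nonzero sign pattern (i_1,…,i_{k-1}) ∈ {0,1}^{k-1} \ {(0,…,0)}. Then A ≪ Δ·E^{-1/2}·N_1⋯N_k + E^{-1}·N_1⋯N_k. -/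
open Finset

set_option maxHeartbeats 800000 in
/-- Counting lemma (Lemma 2.4 of Zhai): for `k = m + 1 ≥ 3`, a fixed nonzero sign
pattern, `N_j > 1`, `E = max N_j`, `0 < Δ ≤ C₀ E^{1/2}`, the number of tuples
`(n_1,…,n_k)` with `N_j < n_j ≤ 2N_j` and `|√n_1 + (-1)^{i_1}√n_2 + ⋯| < Δ`
is `≪ Δ E^{-1/2} N_1⋯N_k + E^{-1} N_1⋯N_k`. -/
theorem stmt_6 (m : ℕ) (hm : 2 ≤ m) (C₀ : ℝ) (hC₀ : 0 < C₀) :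
    ∃ C > 0, ∀ (N : Fin (m + 1) → ℝ) (Δ : ℝ) (i : Fin m → Bool),
      (∀ j, 1 < N j) → (∃ j, i j = true) → 0 < Δ →
      Δ ≤ C₀ * Real.sqrt (⨆ j, N j) →
      (Nat.card {n : Fin (m + 1) → ℕ //
          (∀ j, N j < (n j : ℝ) ∧ (n j : ℝ) ≤ 2 * N j) ∧
          |Real.sqrt (n 0) + ∑ j : Fin m,
              (if i j then (-1:ℝ) else 1) * Real.sqrt (n j.succ)| < Δ} : ℝ)
        ≤ C * (Δ * (⨆ j, N j) ^ (-(1:ℝ)/2) * ∏ j, N j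
              + (⨆ j, N j)⁻¹ * ∏ j, N j) := by
  classical
  set K : ℝ := 4 * (Real.sqrt 2 * (m + 1) + C₀) with hKdef
  have hK0 : 0 < K := by positivity
  refine ⟨2 ^ m * (K + 2), by positivity, ?_⟩
  intro N Δ i hN _ hΔ hΔE
  set E := ⨆ j, N j with hEdef
  obtain ⟨js, hjs⟩ : ∃ j, N j = E := exists_eq_ciSup_of_finite
  have hNE : ∀ j, N j ≤ E := fun j => le_ciSup (Set.Finite.bddAbove (Set.finite_range N)) j
  have hE1 : 1 < E := hjs ▸ hN js
  have hE0 : (0:ℝ) < E := by linarith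
  have hsE : (0:ℝ) < Real.sqrt E := Real.sqrt_pos.mpr hE0
  -- signs
  set ε : Fin (m+1) → ℝ := fun j => Fin.cases 1 (fun j' => if i j' then (-1:ℝ) else 1) j
    with hεdef
  have hε1 : ∀ j, ε j = 1 ∨ ε j = -1 := by
    intro j
    induction j using Fin.cases with
    | zero => left; simp [hεdef]
    | succ j' => by_cases h : i j' <;> simp [hεdef, h]
  have hεabs : ∀ j, |ε j| = 1 := by intro j; rcases hε1 j with h | h <;> simp [h]
  have hεsq : ∀ j, ε j * ε j = 1 := by intro j; rcases hε1 j with h | h <;> rw [h] <;> norm_num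
  have hsum : ∀ n : Fin (m+1) → ℕ,
      Real.sqrt (n 0) + ∑ j : Fin m, (if i j then (-1:ℝ) else 1) * Real.sqrt (n j.succ)
      = ∑ j : Fin (m+1), ε j * Real.sqrt (n j) := by
    intro n
    rw [Fin.sum_univ_succ]
    simp [hεdef]
  set T : (Fin (m+1) → ℕ) → ℝ := fun n => ∑ j ∈ univ.erase js, ε j * Real.sqrt (n j) with hTdef
  set L : ℕ := ⌊K * Δ * Real.sqrt E⌋₊ + 1 with hLdef
  set g : (Fin (m+1) → ℕ) → ℕ := fun n => ⌈(max 0 (-(ε js) * T n - Δ))^2⌉₊ with hgdef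
  -- key per-tuple estimate
  have key : ∀ n : Fin (m+1) → ℕ,
      ((∀ j, N j < (n j : ℝ) ∧ (n j : ℝ) ≤ 2 * N j) ∧
        |Real.sqrt (n 0) + ∑ j : Fin m,
            (if i j then (-1:ℝ) else 1) * Real.sqrt (n j.succ)| < Δ) →
      g n ≤ n js ∧ n js < g n + L := by
    rintro n ⟨hn1, hn2⟩
    rw [hsum n] at hn2
    set b : ℝ := -(ε js) * T n with hbdef
    set c : ℝ := max 0 (b - Δ) with hcdef
    have hgn : g n = ⌈c ^ 2⌉₊ := by rw [hgdef]
    have hsplit : ∑ j : Fin (m+1), ε j * Real.sqrt (n j)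
        = ε js * Real.sqrt (n js) + T n := by
      rw [hTdef]
      exact (Finset.add_sum_erase _ _ (mem_univ js)).symm
    have habs : |Real.sqrt (n js) - b| < Δ := by
      have h1 : Real.sqrt (n js) - b
          = ε js * ∑ j : Fin (m+1), ε j * Real.sqrt (n j) := by
        rw [hsplit, hbdef]
        linear_combination (-Real.sqrt ((n js : ℕ) : ℝ)) * hεsq js
      rw [h1, abs_mul, hεabs js, one_mul]
      exact hn2
    rw [abs_sub_lt_iff] at habs
    obtain ⟨habs1, habs2⟩ := habs
    have hc0 : (0:ℝ) ≤ c := le_max_left _ _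
    have hc_le : c ≤ Real.sqrt (n js) := max_le (Real.sqrt_nonneg _) (by linarith)
    have hcsq : c ^ 2 ≤ ((n js : ℕ) : ℝ) := by
      have h := Real.sq_sqrt (show (0:ℝ) ≤ ((n js : ℕ) : ℝ) from Nat.cast_nonneg _)
      calc c ^ 2 ≤ Real.sqrt (n js) ^ 2 := by nlinarith
        _ = ((n js : ℕ) : ℝ) := h
    have hd0 : (0:ℝ) < b + Δ := lt_of_le_of_lt (Real.sqrt_nonneg _) (by linarith)
    have hxlt : ((n js : ℕ) : ℝ) < (b + Δ) ^ 2 := (Real.sqrt_lt' hd0).mp (by linarith)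
    -- bound on |T n|
    have hT : |T n| ≤ (m : ℝ) * (Real.sqrt 2 * Real.sqrt E) := by
      have hcard : (univ.erase js).card = m := by
        simp [Finset.card_erase_of_mem]
      calc |T n| ≤ ∑ j ∈ univ.erase js, |ε j * Real.sqrt (n j)| := by
            rw [hTdef]; exact Finset.abs_sum_le_sum_abs _ _
        _ ≤ ∑ _j ∈ univ.erase js, Real.sqrt 2 * Real.sqrt E := by
            apply Finset.sum_le_sum
            intro j _
            rw [abs_mul, hεabs j, one_mul, abs_of_nonneg (Real.sqrt_nonneg _),
              ← Real.sqrt_mul (by norm_num : (0:ℝ) ≤ 2)]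
            apply Real.sqrt_le_sqrt
            have h1 := (hn1 j).2
            have h2 := hNE j
            linarith
        _ = (m : ℝ) * (Real.sqrt 2 * Real.sqrt E) := by
            rw [Finset.sum_const, hcard, nsmul_eq_mul]
    have hb_le : b ≤ |T n| := by
      calc b ≤ |b| := le_abs_self _
        _ = |T n| := by rw [hbdef, abs_mul, abs_neg, hεabs js, one_mul]
    have hd_le : b + Δ ≤ (Real.sqrt 2 * (m + 1) + C₀) * Real.sqrt E := by
      have h2 : (0:ℝ) ≤ Real.sqrt 2 := Real.sqrt_nonneg _
      nlinarith
    have hd2 : (b + Δ) ^ 2 - c ^ 2 ≤ K * Δ * Real.sqrt E := by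
      have h2d : b + Δ - c ≤ 2 * Δ := by
        have := le_max_right (0:ℝ) (b - Δ); linarith
      have hcd : c < b + Δ := lt_of_le_of_lt hc_le (by linarith)
      have h1 : (b + Δ) ^ 2 - c ^ 2 = (b + Δ - c) * (b + Δ + c) := by ring
      have h3 : (b + Δ - c) * (b + Δ + c) ≤ (2 * Δ) * (2 * (b + Δ)) :=
        mul_le_mul h2d (by linarith) (by linarith) (by positivity)
      have h4 : (2 * Δ) * (2 * (b + Δ))
          ≤ 4 * Δ * ((Real.sqrt 2 * (m + 1) + C₀) * Real.sqrt E) := by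
        calc (2 * Δ) * (2 * (b + Δ)) = 4 * Δ * (b + Δ) := by ring
          _ ≤ 4 * Δ * ((Real.sqrt 2 * (m + 1) + C₀) * Real.sqrt E) :=
            mul_le_mul_of_nonneg_left hd_le (by positivity)
      calc (b + Δ) ^ 2 - c ^ 2 ≤ 4 * Δ * ((Real.sqrt 2 * (m + 1) + C₀) * Real.sqrt E) := by
            rw [h1]; linarith
        _ = K * Δ * Real.sqrt E := by rw [hKdef]; ring
    have hLr : K * Δ * Real.sqrt E < (L : ℝ) := by
      rw [hLdef]; push_cast; exact Nat.lt_floor_add_one _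
    constructor
    · rw [hgn]; exact Nat.ceil_le.mpr hcsq
    · have hx2 : ((n js : ℕ) : ℝ) < ((g n : ℕ) : ℝ) + (L : ℝ) := by
        rw [hgn]
        have := Nat.le_ceil (c ^ 2)
        linarith
      exact_mod_cast hx2
  -- the target finset
  set Tpi : Finset (Fin (m+1) → ℕ) :=
    Fintype.piFinset (fun j => if j = js then {0} else Finset.Ioc ⌊N j⌋₊ ⌊2 * N j⌋₊) with hTpi
  have hmain : Nat.card {n : Fin (m + 1) → ℕ //
      (∀ j, N j < (n j : ℝ) ∧ (n j : ℝ) ≤ 2 * N j) ∧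
      |Real.sqrt (n 0) + ∑ j : Fin m,
          (if i j then (-1:ℝ) else 1) * Real.sqrt (n j.succ)| < Δ}
      ≤ Tpi.card * L := by
    have hcardT : Nat.card (↥((Tpi ×ˢ Finset.range L) : Finset _)) = Tpi.card * L := by
      rw [Nat.card_eq_finsetCard, Finset.card_product, Finset.card_range]
    rw [← hcardT]
    have hmem : ∀ x : {n : Fin (m + 1) → ℕ //
        (∀ j, N j < (n j : ℝ) ∧ (n j : ℝ) ≤ 2 * N j) ∧
        |Real.sqrt (n 0) + ∑ j : Fin m,
            (if i j then (-1:ℝ) else 1) * Real.sqrt (n j.succ)| < Δ},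
        (Function.update x.1 js 0, x.1 js - g x.1) ∈ Tpi ×ˢ Finset.range L := by
      intro x
      rw [Finset.mem_product]
      constructor
      · rw [hTpi, Fintype.mem_piFinset]
        intro j
        by_cases hj : j = js
        · subst hj; simp
        · show Function.update x.1 js 0 j ∈ _
          rw [Function.update_of_ne hj, if_neg hj, Finset.mem_Ioc]
          obtain ⟨h1, h2⟩ := x.2.1 j
          constructor
          · exact (Nat.floor_lt (by linarith [hN j])).mpr h1
          · exact Nat.le_floor h2
      · rw [Finset.mem_range]
        have hk := key x.1 x.2
        omega
    apply Nat.card_le_card_of_injective (fun x => ⟨_, hmem x⟩)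
    intro x y hxy
    simp only [Subtype.mk.injEq, Prod.mk.injEq] at hxy
    obtain ⟨h1, h2⟩ := hxy
    have hne : ∀ j, j ≠ js → x.1 j = y.1 j := by
      intro j hj
      have := congrFun h1 j
      rwa [Function.update_of_ne hj, Function.update_of_ne hj] at this
    have hTeq : T x.1 = T y.1 := by
      rw [hTdef]
      exact Finset.sum_congr rfl (fun j hj => by rw [hne j (Finset.ne_of_mem_erase hj)])
    have hgeq : g x.1 = g y.1 := by rw [hgdef]; simp only [hTeq]
    have hx' := key x.1 x.2
    have hy' := key y.1 y.2
    have hjseq : x.1 js = y.1 js := by omega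
    apply Subtype.ext; funext j
    by_cases hj : j = js
    · rw [hj]; exact hjseq
    · exact hne j hj
  -- counting the target finset
  have hTpicard : (Tpi.card : ℝ) ≤ 2 ^ m * ∏ j ∈ univ.erase js, N j := by
    rw [hTpi, Fintype.card_piFinset]
    push_cast
    calc ∏ j, ((if j = js then ({0} : Finset ℕ) else Finset.Ioc ⌊N j⌋₊ ⌊2 * N j⌋₊).card : ℝ)
        ≤ ∏ j, (if j = js then 1 else 2 * N j) := by
          apply Finset.prod_le_prod
          · exact fun j _ => Nat.cast_nonneg _
          · intro j _
            by_cases hj : j = js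
            · simp [hj]
            · simp only [hj, if_false, Nat.card_Ioc]
              rw [Nat.cast_sub (Nat.floor_mono (by linarith [hN j] : N j ≤ 2 * N j))]
              have h1 : (⌊2 * N j⌋₊ : ℝ) ≤ 2 * N j := Nat.floor_le (by linarith [hN j])
              have h2 : N j - 1 < (⌊N j⌋₊ : ℝ) := Nat.sub_one_lt_floor _
              linarith [hN j]
      _ = 2 ^ m * ∏ j ∈ univ.erase js, N j := by
          rw [← Finset.mul_prod_erase univ _ (mem_univ js), if_pos rfl, one_mul,
            Finset.prod_congr rfl (fun j hj => if_neg (Finset.ne_of_mem_erase hj)),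
            Finset.prod_mul_distrib, Finset.prod_const]
          congr 2
          simp [Finset.card_erase_of_mem]
  -- final assembly
  have hP0 : (0:ℝ) < ∏ j ∈ univ.erase js, N j :=
    Finset.prod_pos (fun j _ => by linarith [hN j])
  have hprodN : ∏ j, N j = E * ∏ j ∈ univ.erase js, N j := by
    rw [← Finset.mul_prod_erase univ N (mem_univ js), hjs]
  have hrpow : E ^ (-(1:ℝ)/2) = (Real.sqrt E)⁻¹ := by
    rw [neg_div, Real.rpow_neg hE0.le, ← Real.sqrt_eq_rpow]
  have hLreal : (L : ℝ) ≤ K * Δ * Real.sqrt E + 2 := by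
    rw [hLdef]; push_cast
    have := Nat.floor_le (show 0 ≤ K * Δ * Real.sqrt E by positivity)
    linarith
  have hA : (Nat.card {n : Fin (m + 1) → ℕ //
      (∀ j, N j < (n j : ℝ) ∧ (n j : ℝ) ≤ 2 * N j) ∧
      |Real.sqrt (n 0) + ∑ j : Fin m,
          (if i j then (-1:ℝ) else 1) * Real.sqrt (n j.succ)| < Δ} : ℝ)
      ≤ (Tpi.card : ℝ) * (L : ℝ) := by exact_mod_cast hmain
  set P' := ∏ j ∈ univ.erase js, N j with hP'
  calc (Nat.card {n : Fin (m + 1) → ℕ //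
      (∀ j, N j < (n j : ℝ) ∧ (n j : ℝ) ≤ 2 * N j) ∧
      |Real.sqrt (n 0) + ∑ j : Fin m,
          (if i j then (-1:ℝ) else 1) * Real.sqrt (n j.succ)| < Δ} : ℝ)
      ≤ (Tpi.card : ℝ) * (L : ℝ) := hA
    _ ≤ (2 ^ m * P') * (K * Δ * Real.sqrt E + 2) := by
        apply mul_le_mul hTpicard hLreal (Nat.cast_nonneg _) (by positivity)
    _ ≤ 2 ^ m * (K + 2) * (Δ * E ^ (-(1:ℝ)/2) * ∏ j, N j + E⁻¹ * ∏ j, N j) := by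
        rw [hrpow, hprodN]
        have hE' : (Real.sqrt E)⁻¹ * E = Real.sqrt E := by
          rw [inv_mul_eq_div, Real.div_sqrt]
        have hE'' : E⁻¹ * E = 1 := inv_mul_cancel₀ hE0.ne'
        rw [show Δ * (Real.sqrt E)⁻¹ * (E * P') = Δ * ((Real.sqrt E)⁻¹ * E) * P' by ring, hE',
          show E⁻¹ * (E * P') = E⁻¹ * E * P' by ring, hE'', one_mul]
        have ht : (0:ℝ) ≤ Δ * Real.sqrt E * P' := by positivity
        have hp : (0:ℝ) ≤ P' := hP0.le
        have hc : (0:ℝ) ≤ 2 ^ m := by positivity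
        nlinarith [mul_nonneg hc ht, mul_nonneg (mul_nonneg hc hK0.le) hp]
end

section
/- Let -1/2 < a < 0 and h ≥ 3 be an integer. Then the multiple sum ∑_{n_1 ≤ y} ⋯ ∑_{n_h ≤ y} σ_a(n_1)⋯σ_a(n_h) / ((n_1⋯n_h)^{3/4 + a/2} · (√n_1 + ⋯ + √n_h)) is O(y^{(h-2)/4 - ah/2}) as y → ∞. -/
open Finset Real

/-- The sum of divisors function `σ_a(n) = ∑_{d ∣ n} d^a`. -/
noncomputable def sigmaA (a : ℝ) (n : ℕ) : ℝ := ∑ d ∈ n.divisors, (d : ℝ) ^ a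

-- partial sums of m^{-t}, 0 < t < 1
lemma aux_sum_rpow_le {t : ℝ} (ht0 : 0 < t) (ht1 : t < 1) (M : ℕ) :
    ∑ m ∈ Finset.Icc 1 M, (m : ℝ) ^ (-t) ≤ (M : ℝ) ^ (1 - t) / (1 - t) := by
  have h1t : 0 < 1 - t := by linarith
  induction M with
  | zero => simp [Real.zero_rpow (by linarith : (1:ℝ)-t ≠ 0), le_div_iff₀ h1t]
  | succ M ih =>
    rw [Finset.sum_Icc_succ_top (by omega : 1 ≤ M + 1)]
    have hx : (0:ℝ) < (M:ℝ) + 1 := by positivity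
    have key : (M : ℝ) ^ (1 - t) ≤ ((M:ℝ)+1) ^ (1-t) - (1-t) * ((M:ℝ)+1) ^ (-t) := by
      have hM : (M : ℝ) = ((M:ℝ)+1) * (1 + (-1/((M:ℝ)+1))) := by field_simp; ring
      have hbern : (1 + (-1/((M:ℝ)+1))) ^ (1-t) ≤ 1 + (1-t) * (-1/((M:ℝ)+1)) := by
        apply rpow_one_add_le_one_add_mul_self _ h1t.le (by linarith)
        rw [neg_div, neg_le_neg_iff]
        rw [div_le_one hx]; linarith [Nat.cast_nonneg (α := ℝ) M]
      calc (M : ℝ) ^ (1 - t) = ((M:ℝ)+1) ^ (1-t) * (1 + (-1/((M:ℝ)+1))) ^ (1-t) := by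
            rw [← Real.mul_rpow hx.le (by nlinarith [Nat.cast_nonneg (α := ℝ) M] : (0:ℝ) ≤ 1 + -1/((M:ℝ)+1)), ← hM]
        _ ≤ ((M:ℝ)+1) ^ (1-t) * (1 + (1-t) * (-1/((M:ℝ)+1))) := by
            apply mul_le_mul_of_nonneg_left hbern (by positivity)
        _ = ((M:ℝ)+1) ^ (1-t) - (1-t) * (((M:ℝ)+1) ^ (1-t) / ((M:ℝ)+1)) := by ring
        _ = ((M:ℝ)+1) ^ (1-t) - (1-t) * ((M:ℝ)+1) ^ (-t) := by
            rw [← Real.rpow_sub_one hx.ne']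
            ring_nf
    have : ((M:ℕ):ℝ) ^ (1-t) / (1-t) + (((M:ℕ)+1:ℕ):ℝ) ^ (-t) ≤ (((M+1:ℕ)):ℝ) ^ (1-t)/(1-t) := by
      push_cast
      rw [div_add' _ _ _ h1t.ne', div_le_div_iff_of_pos_right h1t]
      nlinarith [key]
    calc ∑ m ∈ Finset.Icc 1 M, (m : ℝ) ^ (-t) + ((M+1:ℕ) : ℝ) ^ (-t)
        ≤ (M : ℝ) ^ (1-t)/(1-t) + ((M+1:ℕ) : ℝ) ^ (-t) := by linarith [ih]
      _ ≤ _ := by exact_mod_cast this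

lemma key_sum (a t : ℝ) (ha : a < 0) (ht0 : 0 < t) (ht1 : t < 1) (y : ℝ) (hy : 1 ≤ y) :
    ∑ n ∈ Finset.Icc 1 ⌊y⌋₊, sigmaA a n * (n : ℝ) ^ (-t)
      ≤ ((∑' d : ℕ, (d : ℝ) ^ (a - 1)) / (1 - t)) * y ^ (1 - t) := by
  have h1t : 0 < 1 - t := by linarith
  set N := ⌊y⌋₊ with hN
  set F : ℕ × ℕ → ℝ := fun p => (p.1 : ℝ) ^ (a - t) * (p.2 : ℝ) ^ (-t) with hF
  have hFnn : ∀ p : ℕ × ℕ, 0 ≤ F p := fun p => by positivity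
  -- step 1: rewrite each term as a divisorsAntidiagonal sum
  have step1 : ∀ n ∈ Finset.Icc 1 N, sigmaA a n * (n : ℝ) ^ (-t)
      = ∑ p ∈ n.divisorsAntidiagonal, F p := by
    intro n hn
    rw [Finset.mem_Icc] at hn
    rw [sigmaA, Finset.sum_mul, Nat.sum_divisorsAntidiagonal (f := fun d e => F (d, e))]
    apply Finset.sum_congr rfl
    intro d hd
    rw [Nat.mem_divisors] at hd
    obtain ⟨e, he⟩ := hd.1
    have hd0 : 0 < d := Nat.pos_of_dvd_of_pos hd.1 (by omega)
    have he0 : 0 < e := by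
      rcases Nat.eq_zero_or_pos e with h0 | h0
      · subst h0; rw [Nat.mul_zero] at he; omega
      · exact h0
    have : n / d = e := by rw [he]; exact Nat.mul_div_cancel_left e hd0
    rw [this, hF]
    simp only
    have : ((n : ℝ)) = (d : ℝ) * (e : ℝ) := by exact_mod_cast congrArg Nat.cast he
    rw [this, Real.mul_rpow (by positivity) (by positivity),
      show a - t = a + -t from by ring, Real.rpow_add (by exact_mod_cast hd0)]
    ring
  rw [Finset.sum_congr rfl step1]
  -- step 2: the union of antidiagonals is contained in the mapped sigma set
  set T' : Finset (ℕ × ℕ) :=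
    ((Finset.Icc 1 N).sigma fun d => Finset.Icc 1 (N / d)).map
      ⟨fun q => (q.1, q.2), by intro q r hqr; cases q; cases r; simp_all⟩ with hT'
  have step2 : ∑ n ∈ Finset.Icc 1 N, ∑ p ∈ n.divisorsAntidiagonal, F p ≤ ∑ p ∈ T', F p := by
    rw [← Finset.sum_biUnion]
    · apply Finset.sum_le_sum_of_subset_of_nonneg
      · intro p hp
        rw [Finset.mem_biUnion] at hp
        obtain ⟨n, hn, hpn⟩ := hp
        rw [Nat.mem_divisorsAntidiagonal] at hpn
        rw [Finset.mem_Icc] at hn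
        have h1 : 1 ≤ p.1 := by
          rcases Nat.eq_zero_or_pos p.1 with h0 | h0
          · exfalso; rw [h0] at hpn; omega
          · exact h0
        have h2 : 1 ≤ p.2 := by
          rcases Nat.eq_zero_or_pos p.2 with h0 | h0
          · exfalso; rw [h0] at hpn; omega
          · exact h0
        have hle : p.1 * p.2 ≤ N := hpn.1 ▸ hn.2
        rw [hT', Finset.mem_map]
        refine ⟨⟨p.1, p.2⟩, ?_, rfl⟩
        rw [Finset.mem_sigma, Finset.mem_Icc, Finset.mem_Icc]
        refine ⟨⟨h1, le_trans (Nat.le_mul_of_pos_right _ h2) hle⟩, h2, ?_⟩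
        rw [Nat.le_div_iff_mul_le h1]
        calc p.2 * p.1 = p.1 * p.2 := Nat.mul_comm _ _
          _ ≤ N := hle
      · intro p _ _; exact hFnn p
    · intro m _ n _ hmn
      apply Finset.disjoint_left.mpr
      intro p hpm hpn
      rw [Nat.mem_divisorsAntidiagonal] at hpm hpn
      exact hmn (hpm.1.symm.trans hpn.1)
  refine le_trans step2 ?_
  -- step 3: evaluate the sigma sum
  rw [hT', Finset.sum_map, Finset.sum_sigma]
  have hyN : (N : ℝ) ≤ y := Nat.floor_le (by linarith)
  have step3 : ∀ d ∈ Finset.Icc 1 N,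
      ∑ m ∈ Finset.Icc 1 (N / d), F (d, m) ≤ (d : ℝ) ^ (a - 1) * (y ^ (1 - t) / (1 - t)) := by
    intro d hd
    rw [Finset.mem_Icc] at hd
    have hd1 : (1 : ℝ) ≤ (d : ℝ) := by exact_mod_cast hd.1
    have hd0 : (0 : ℝ) < (d : ℝ) := by linarith
    simp only [hF]
    rw [← Finset.mul_sum]
    have hinner : ∑ m ∈ Finset.Icc 1 (N / d), (m : ℝ) ^ (-t) ≤ (y / d) ^ (1 - t) / (1 - t) := by
      refine le_trans (aux_sum_rpow_le ht0 ht1 _) ?_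
      apply div_le_div_of_nonneg_right _ h1t.le
      apply Real.rpow_le_rpow (Nat.cast_nonneg _) _ h1t.le
      calc ((N / d : ℕ) : ℝ) ≤ (N : ℝ) / (d : ℝ) := Nat.cast_div_le
        _ ≤ y / d := by apply div_le_div_of_nonneg_right hyN hd0.le |>.trans_eq rfl
    calc (d : ℝ) ^ (a - t) * ∑ m ∈ Finset.Icc 1 (N / d), (m : ℝ) ^ (-t)
        ≤ (d : ℝ) ^ (a - t) * ((y / d) ^ (1 - t) / (1 - t)) := by
          apply mul_le_mul_of_nonneg_left hinner (by positivity)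
      _ = (d : ℝ) ^ (a - 1) * (y ^ (1 - t) / (1 - t)) := by
          rw [Real.div_rpow (by linarith) hd0.le]
          rw [show a - t = (a - 1) + (1 - t) by ring, Real.rpow_add hd0]
          field_simp
  refine le_trans (Finset.sum_le_sum step3) ?_
  rw [← Finset.sum_mul]
  have hK : ∑ i ∈ Finset.Icc 1 N, (i : ℝ) ^ (a - 1) ≤ ∑' d : ℕ, (d : ℝ) ^ (a - 1) :=
    Summable.sum_le_tsum _ (fun i _ => by positivity) (by rw [Real.summable_nat_rpow]; linarith)
  rw [div_mul_eq_mul_div, mul_div_assoc]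
  exact mul_le_mul_of_nonneg_right hK (div_nonneg (by positivity) h1t.le)


/-- For `-1/2 < a < 0` and `h ≥ 3`,
`∑_{n_1,…,n_h ≤ y} σ_a(n_1)⋯σ_a(n_h)/((n_1⋯n_h)^{3/4+a/2}(√n_1+⋯+√n_h))
  = O(y^{(h-2)/4 - ah/2})`. -/
theorem stmt_10 (a : ℝ) (ha₁ : -1/2 < a) (ha₂ : a < 0) (h : ℕ) (hh : 3 ≤ h) :
    ∃ C > 0, ∀ y : ℝ, 1 ≤ y →
      ∑ n ∈ Fintype.piFinset (fun _ : Fin h => Finset.Icc 1 ⌊y⌋₊),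
        (∏ j, sigmaA a (n j)) /
          ((∏ j, (n j : ℝ)) ^ (3/4 + a/2) * ∑ j, Real.sqrt (n j))
      ≤ C * y ^ (((h : ℝ) - 2)/4 - a * h / 2) := by
  have hh3 : (3 : ℝ) ≤ (h : ℝ) := by exact_mod_cast hh
  have hhpos : (0 : ℝ) < (h : ℝ) := by linarith
  set t : ℝ := 3/4 + a/2 + 1/(2 * (h : ℝ)) with htdef
  have ht0 : 0 < t := by
    have : 0 < 1/(2 * (h : ℝ)) := by positivity
    rw [htdef]; linarith
  have ht1 : t < 1 := by
    have h1 : 1/(2 * (h : ℝ)) ≤ 1/6 := by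
      apply div_le_div_of_nonneg_left (by norm_num) (by norm_num) (by linarith)
    rw [htdef]; linarith
  have h1t : 0 < 1 - t := by linarith
  set K : ℝ := (∑' d : ℕ, (d : ℝ) ^ (a - 1)) / (1 - t) with hK
  have hKpos : 0 < K := by
    rw [hK]
    apply div_pos _ h1t
    have hsumm : Summable (fun d : ℕ => (d : ℝ) ^ (a - 1)) := by
      rw [Real.summable_nat_rpow]; linarith
    have h1le : (1 : ℝ) ≤ ∑' d : ℕ, (d : ℝ) ^ (a - 1) := by
      have := Summable.le_tsum hsumm 1 (fun i _ => by positivity)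
      simpa using this
    linarith
  refine ⟨K ^ h, pow_pos hKpos h, fun y hy => ?_⟩
  set N := ⌊y⌋₊ with hN
  -- termwise bound
  have term_bound : ∀ n ∈ Fintype.piFinset (fun _ : Fin h => Finset.Icc 1 N),
      (∏ j, sigmaA a (n j)) / ((∏ j, (n j : ℝ)) ^ (3/4 + a/2) * ∑ j, Real.sqrt (n j))
      ≤ ∏ j, (sigmaA a (n j) * ((n j : ℝ)) ^ (-t)) := by
    intro n hn
    rw [Fintype.mem_piFinset] at hn
    have hnj : ∀ j, (1 : ℝ) ≤ (n j : ℝ) := by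
      intro j
      have := hn j
      rw [Finset.mem_Icc] at this
      exact_mod_cast this.1
    set P : ℝ := ∏ j, (n j : ℝ) with hP
    have hP1 : 1 ≤ P := by
      rw [hP]
      calc (1:ℝ) = ∏ _j : Fin h, (1:ℝ) := by simp
        _ ≤ ∏ j, ((n j : ℝ)) := Finset.prod_le_prod (by intro i _; norm_num) (fun j _ => hnj j)
    have hP0 : 0 < P := lt_of_lt_of_le one_pos hP1
    have hsig : (0:ℝ) ≤ ∏ j, sigmaA a (n j) := by
      apply Finset.prod_nonneg
      intro j _
      apply Finset.sum_nonneg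
      intro d _
      positivity
    -- AM-GM : P^(1/(2h)) ≤ ∑ sqrt
    have hamgm : P ^ (1/(2 * (h : ℝ))) ≤ ∑ j, Real.sqrt (n j) := by
      have h1 : P ^ (1/(2 * (h : ℝ))) = ∏ j, (Real.sqrt (n j)) ^ ((h : ℝ))⁻¹ := by
        rw [hP, ← Real.finset_prod_rpow _ _ (fun j _ => (n j).cast_nonneg) _]
        apply Finset.prod_congr rfl
        intro j _
        rw [Real.sqrt_eq_rpow, ← Real.rpow_mul (Nat.cast_nonneg _)]
        congr 1
        ring
      rw [h1]
      have h2 : ∏ j, (Real.sqrt (n j)) ^ ((h : ℝ))⁻¹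
          ≤ ∑ j : Fin h, ((h : ℝ))⁻¹ * Real.sqrt (n j) := by
        apply Real.geom_mean_le_arith_mean_weighted
        · intro i _; positivity
        · simp [Finset.card_univ]
          field_simp
        · intro i _; positivity
      refine h2.trans ?_
      apply Finset.sum_le_sum
      intro i _
      have hs0 : 0 ≤ Real.sqrt (n i) := Real.sqrt_nonneg _
      have : ((h : ℝ))⁻¹ ≤ 1 := by
        rw [inv_le_one_iff₀]; right; linarith
      nlinarith
    have hDen : P ^ t ≤ P ^ (3/4 + a/2) * ∑ j, Real.sqrt (n j) := by
      rw [htdef, Real.rpow_add hP0]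
      apply mul_le_mul_of_nonneg_left hamgm (by positivity)
    have hPt0 : 0 < P ^ t := Real.rpow_pos_of_pos hP0 t
    calc (∏ j, sigmaA a (n j)) / (P ^ (3/4 + a/2) * ∑ j, Real.sqrt (n j))
        ≤ (∏ j, sigmaA a (n j)) / P ^ t := by
          apply div_le_div_of_nonneg_left hsig hPt0 hDen
      _ = (∏ j, sigmaA a (n j)) * P ^ (-t) := by
          rw [Real.rpow_neg hP0.le, div_eq_mul_inv]
      _ = ∏ j, (sigmaA a (n j) * ((n j : ℝ)) ^ (-t)) := by
          rw [Finset.prod_mul_distrib, hP, ← Real.finset_prod_rpow _ _ (fun j _ => (n j).cast_nonneg) _]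
  refine le_trans (Finset.sum_le_sum term_bound) ?_
  rw [Finset.sum_prod_piFinset (Finset.Icc 1 N) (fun (_ : Fin h) (x : ℕ) => sigmaA a x * (x : ℝ) ^ (-t))]
  have hS : ∀ j : Fin h, ∑ x ∈ Finset.Icc 1 N, sigmaA a x * (x : ℝ) ^ (-t)
      ≤ K * y ^ (1 - t) := fun j => key_sum a t ha₂ ht0 ht1 y hy
  have hSnn : (0:ℝ) ≤ ∑ x ∈ Finset.Icc 1 N, sigmaA a x * (x : ℝ) ^ (-t) := by
    apply Finset.sum_nonneg
    intro x _
    have : (0:ℝ) ≤ sigmaA a x := Finset.sum_nonneg (fun d _ => by positivity)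
    positivity
  calc ∏ _j : Fin h, ∑ x ∈ Finset.Icc 1 N, sigmaA a x * (x : ℝ) ^ (-t)
      ≤ ∏ _j : Fin h, (K * y ^ (1 - t)) := by
        apply Finset.prod_le_prod (fun j _ => hSnn) (fun j _ => hS j)
    _ = (K * y ^ (1 - t)) ^ h := by
        rw [Finset.prod_const, Finset.card_univ, Fintype.card_fin]
    _ = K ^ h * y ^ (((h : ℝ) - 2)/4 - a * h / 2) := by
        have hne : (h : ℝ) ≠ 0 := by linarith
        have hexp : (1 - t) * (h : ℝ) = ((h : ℝ) - 2)/4 - a * h / 2 := by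
          rw [htdef]; field_simp; ring
        rw [mul_pow, ← Real.rpow_natCast (y ^ (1 - t)) h, ← Real.rpow_mul (by linarith), hexp]
end

section
/- Let -1/2 < a < 0, k ≥ 2, and 1 ≤ l < k. Then the series s_{k;l}(σ_a) = ∑ σ_a(n_1)⋯σ_a(n_k)/(n_1⋯n_k)^{3/4+a/2}, summed over all k-tuples of positive integers with √n_1 + ⋯ + √n_l = √n_{l+1} + ⋯ + √n_k, converges absolutely. -/
set_option maxHeartbeats 1000000
open Real Finset

noncomputable def vspan (N : ℕ) : Submodule ℚ ℝ :=
  Submodule.span ℚ ((fun d : ℕ => Real.sqrt d) '' (N.divisors : Set ℕ))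

lemma sqrt_mem_vspan {N d : ℕ} (hd : d ∈ N.divisors) : Real.sqrt d ∈ vspan N := by
  unfold vspan
  exact Submodule.subset_span ⟨d, by exact_mod_cast hd, rfl⟩

lemma one_mem_vspan {N : ℕ} (hN : N ≠ 0) : (1 : ℝ) ∈ vspan N := by
  have h : Real.sqrt ((1:ℕ):ℝ) ∈ vspan N := sqrt_mem_vspan (Nat.one_mem_divisors.mpr hN)
  rw [Nat.cast_one, Real.sqrt_one] at h
  exact h

lemma ratCast_mem_vspan {N : ℕ} (hN : N ≠ 0) (q : ℚ) : (q : ℝ) ∈ vspan N := by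
  simpa using (vspan N).smul_mem q (one_mem_vspan hN)

lemma vspan_mono {N N' : ℕ} (hN' : N' ≠ 0) (h : N ∣ N') : vspan N ≤ vspan N' :=
  Submodule.span_mono (Set.image_mono (by exact_mod_cast Nat.divisors_subset_of_dvd hN' h))

lemma sqrt_mul_sqrt {N d e : ℕ} (hd : d ∈ N.divisors) (he : e ∈ N.divisors) :
    ∃ g f : ℕ, f ∈ N.divisors ∧ Real.sqrt d * Real.sqrt e = (g : ℝ) * Real.sqrt f := by
  obtain ⟨hdN, hN⟩ := Nat.mem_divisors.mp hd
  obtain ⟨heN, -⟩ := Nat.mem_divisors.mp he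
  have hd0 : d ≠ 0 := fun h => hN (by simpa [h] using hdN)
  have he0 : e ≠ 0 := fun h => hN (by simpa [h] using heN)
  set g := Nat.gcd d e with hg
  have hg0 : 0 < g := Nat.gcd_pos_of_pos_left _ (Nat.pos_of_ne_zero hd0)
  have hgd : g ∣ d := Nat.gcd_dvd_left d e
  have hge : g ∣ e := Nat.gcd_dvd_right d e
  have hcop : Nat.Coprime (d / g) (e / g) := Nat.coprime_div_gcd_div_gcd hg0
  refine ⟨g, (d / g) * (e / g), ?_, ?_⟩
  · refine Nat.mem_divisors.mpr ⟨hcop.mul_dvd_of_dvd_of_dvd ?_ ?_, hN⟩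
    · exact dvd_trans (Nat.div_dvd_of_dvd hgd) hdN
    · exact dvd_trans (Nat.div_dvd_of_dvd hge) heN
  · have hde : (d : ℝ) * e = (g : ℝ) ^ 2 * ((d / g : ℕ) * (e / g : ℕ) : ℕ) := by
      push_cast
      have h1 : (d : ℝ) = g * (d / g : ℕ) := by
        exact_mod_cast (Nat.mul_div_cancel' hgd).symm
      have h2 : (e : ℝ) = g * (e / g : ℕ) := by
        exact_mod_cast (Nat.mul_div_cancel' hge).symm
      rw [h1, h2]; ring
    rw [← Real.sqrt_mul (by positivity) (e : ℝ), hde,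
      Real.sqrt_mul (by positivity), Real.sqrt_sq (by positivity)]

lemma mul_mem_vspan {N : ℕ} {x y : ℝ} (hx : x ∈ vspan N) (hy : y ∈ vspan N) :
    x * y ∈ vspan N := by
  have hle : vspan N * vspan N ≤ vspan N := by
    rw [vspan, Submodule.span_mul_span, Submodule.span_le]
    rintro z hz
    rw [Set.mem_mul] at hz
    obtain ⟨u, ⟨d, hd, rfl⟩, v, ⟨e, he, rfl⟩, rfl⟩ := hz
    obtain ⟨g, f, hf, heq⟩ := sqrt_mul_sqrt (by exact_mod_cast hd) (by exact_mod_cast he)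
    rw [heq]
    have : ((g : ℚ) : ℝ) • Real.sqrt f ∈ vspan N :=
      (vspan N).smul_mem _ (sqrt_mem_vspan hf)
    exact (by simpa using this : (g:ℝ) * Real.sqrt f ∈ vspan N)
  exact hle (Submodule.mul_mem_mul hx hy)

lemma divisors_prime_mul {p M : ℕ} (hp : p.Prime) (hM : M ≠ 0) (hpM : ¬ p ∣ M) :
    (p * M).divisors = M.divisors ∪ M.divisors.image (fun e => p * e) := by
  have hpM0 : p * M ≠ 0 := Nat.mul_ne_zero hp.pos.ne' hM
  ext d
  simp only [Nat.mem_divisors, Finset.mem_union, Finset.mem_image]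
  constructor
  · rintro ⟨hd, -⟩
    by_cases hpd : p ∣ d
    · obtain ⟨e, rfl⟩ := hpd
      right
      refine ⟨e, ⟨?_, hM⟩, rfl⟩
      exact (Nat.mul_dvd_mul_iff_left hp.pos).mp hd
    · left
      refine ⟨?_, hM⟩
      exact Nat.Coprime.dvd_of_dvd_mul_left (((Nat.Prime.coprime_iff_not_dvd hp).mpr hpd).symm) hd
  · rintro (⟨hd, -⟩ | ⟨e, ⟨he, -⟩, rfl⟩)
    · exact ⟨hd.mul_left p, hpM0⟩
    · exact ⟨Nat.mul_dvd_mul_left p he, hpM0⟩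

lemma disjoint_divisors_image {p M : ℕ} (hp : p.Prime) (hpM : ¬ p ∣ M) :
    Disjoint M.divisors (M.divisors.image (fun e => p * e)) := by
  rw [Finset.disjoint_right]
  rintro d hd hd'
  obtain ⟨e, -, rfl⟩ := Finset.mem_image.mp hd
  exact hpM (dvd_trans (Dvd.intro e rfl) (Nat.mem_divisors.mp hd').1)

lemma vspan_prime_mul {p M : ℕ} (hp : p.Prime) (hM : M ≠ 0) (hpM : ¬ p ∣ M) :
    vspan (p * M) = vspan M ⊔ (vspan M).map (LinearMap.mulLeft ℚ (Real.sqrt p)) := by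
  unfold vspan
  rw [divisors_prime_mul hp hM hpM, Finset.coe_union, Set.image_union, Submodule.span_union,
    Finset.coe_image, Set.image_image, Submodule.map_span, Set.image_image]
  congr 2
  apply Set.image_congr
  intro e he
  have he0 : (0:ℝ) ≤ (p : ℝ) := by positivity
  rw [LinearMap.mulLeft_apply]
  push_cast
  rw [Real.sqrt_mul he0]

lemma mem_vspan_prime_mul {p M : ℕ} (hp : p.Prime) (hM : M ≠ 0) (hpM : ¬ p ∣ M) {x : ℝ} :
    x ∈ vspan (p * M) ↔ ∃ A ∈ vspan M, ∃ B ∈ vspan M, x = A + B * Real.sqrt p := by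
  rw [vspan_prime_mul hp hM hpM, Submodule.mem_sup]
  constructor
  · rintro ⟨A, hA, z, hz, rfl⟩
    obtain ⟨B, hB, rfl⟩ := Submodule.mem_map.mp hz
    exact ⟨A, hA, B, hB, by rw [LinearMap.mulLeft_apply]; ring⟩
  · rintro ⟨A, hA, B, hB, rfl⟩
    exact ⟨A, hA, Real.sqrt p * B, Submodule.mem_map.mpr ⟨B, hB, by rw [LinearMap.mulLeft_apply]⟩,
      by ring⟩

def P2 (N : ℕ) : Prop := ∀ x ∈ vspan N, x ≠ 0 → x⁻¹ ∈ vspan N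
def P3 (N : ℕ) : Prop := ∀ m : ℕ, Squarefree m → ¬ m ∣ N → Real.sqrt m ∉ vspan N
def P4 (N : ℕ) : Prop := ∀ c : ℕ → ℚ, (∑ d ∈ N.divisors, (c d : ℝ) * Real.sqrt d) = 0 →
    ∀ d ∈ N.divisors, c d = 0

lemma sum_mem_vspan {M : ℕ} (c : ℕ → ℚ) :
    (∑ e ∈ M.divisors, (c e : ℝ) * Real.sqrt e) ∈ vspan M := by
  refine Submodule.sum_mem _ (fun e he => ?_)
  have := (vspan M).smul_mem (c e) (sqrt_mem_vspan he)
  simpa [Rat.smul_def] using this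

lemma key_zero {p M : ℕ} (hp : p.Prime) (hM : Squarefree M) (hpM : ¬ p ∣ M)
    (ih2 : P2 M) (ih3 : P3 M) {A B : ℝ} (hA : A ∈ vspan M) (hB : B ∈ vspan M)
    (h : A + B * Real.sqrt p = 0) : A = 0 ∧ B = 0 := by
  by_cases hB0 : B = 0
  · exact ⟨by simpa [hB0] using h, hB0⟩
  · exfalso
    have hsp : Real.sqrt p = (-A) * B⁻¹ := by
      field_simp
      linarith [h]
    exact ih3 p hp.squarefree hpM
      (hsp ▸ mul_mem_vspan ((vspan M).neg_mem hA) (ih2 B hB hB0))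

theorem vspan_main : ∀ N : ℕ, Squarefree N → P2 N ∧ P3 N ∧ P4 N := by
  intro N
  induction N using Nat.strong_induction_on with
  | _ N ih =>
  intro hN
  have hN0 : N ≠ 0 := hN.ne_zero
  rcases eq_or_ne N 1 with rfl | hN1
  · -- base case N = 1
    have hmem : ∀ x : ℝ, x ∈ vspan 1 ↔ ∃ q : ℚ, x = (q : ℝ) := by
      intro x
      unfold vspan
      rw [Nat.divisors_one]
      simp only [Finset.coe_singleton, Set.image_singleton, Nat.cast_one, Real.sqrt_one,
        Submodule.mem_span_singleton]
      constructor
      · rintro ⟨q, rfl⟩; exact ⟨q, by simp [Rat.smul_def]⟩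
      · rintro ⟨q, rfl⟩; exact ⟨q, by simp [Rat.smul_def]⟩
    refine ⟨?_, ?_, ?_⟩
    · intro x hx hx0
      obtain ⟨q, rfl⟩ := (hmem x).mp hx
      rw [← Rat.cast_inv]
      exact (hmem _).mpr ⟨q⁻¹, rfl⟩
    · intro m hm hmd hmem'
      have hm1 : m ≠ 1 := fun h => hmd (by simp [h])
      have hnsq : ¬ IsSquare m := by
        rintro ⟨r, rfl⟩
        exact hm1 (by simpa using Nat.isUnit_iff.mp (hm r (dvd_refl _)))
      have hirr : Irrational (Real.sqrt m) := irrational_sqrt_natCast_iff.mpr hnsq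
      obtain ⟨q, hq⟩ := (hmem _).mp hmem'
      exact hirr ⟨q, hq.symm⟩
    · intro c hc d hd
      rw [Nat.divisors_one, Finset.mem_singleton] at hd
      subst hd
      rw [Nat.divisors_one, Finset.sum_singleton, Nat.cast_one, Real.sqrt_one, mul_one] at hc
      exact_mod_cast hc
  · -- inductive step
    set p := N.minFac with hpdef
    have hp : p.Prime := Nat.minFac_prime hN1
    set M := N / p with hMdef
    have hNpM : p * M = N := Nat.mul_div_cancel' (Nat.minFac_dvd N)
    have hMdvd : M ∣ N := Nat.div_dvd_of_dvd (Nat.minFac_dvd N)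
    have hMsf : Squarefree M := hN.squarefree_of_dvd hMdvd
    have hM0 : M ≠ 0 := hMsf.ne_zero
    have hpM : ¬ p ∣ M := by
      intro hd
      have : p * p ∣ N := by
        rw [← hNpM]
        exact mul_dvd_mul_left p hd
      exact hp.one_lt.ne' (Nat.isUnit_iff.mp (hN p this))
    have hMlt : M < N := Nat.div_lt_self (Nat.pos_of_ne_zero hN0) hp.one_lt
    obtain ⟨ih2, ih3, ih4⟩ := ih M hMlt hMsf
    have hpM0 : p * M ≠ 0 := by rw [hNpM]; exact hN0
    have hmono : vspan M ≤ vspan (p * M) := vspan_mono hpM0 (dvd_mul_left M p)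
    rw [← hNpM]
    have hps : Real.sqrt p * Real.sqrt p = (p : ℝ) := Real.mul_self_sqrt (by positivity)
    refine ⟨?_, ?_, ?_⟩
    · -- P2
      intro x hx hx0
      rw [mem_vspan_prime_mul hp hM0 hpM] at hx
      obtain ⟨A, hA, B, hB, rfl⟩ := hx
      by_cases hB0 : B = 0
      · rw [hB0, zero_mul, add_zero] at hx0 ⊢
        exact hmono (ih2 A hA hx0)
      · have key : A ^ 2 - p * B ^ 2 ≠ 0 := by
          intro heq
          have hBinv : B⁻¹ ∈ vspan M := ih2 B hB hB0
          have ht : (A * B⁻¹) ∈ vspan M := mul_mem_vspan hA hBinv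
          have ht2 : (A * B⁻¹) ^ 2 = (p : ℝ) := by
            field_simp
            linarith [heq]
          have hsp : Real.sqrt p = |A * B⁻¹| := by
            rw [← ht2, Real.sqrt_sq_eq_abs]
          rcases abs_cases (A * B⁻¹) with ⟨h1, -⟩ | ⟨h1, -⟩
          · exact ih3 p hp.squarefree hpM (by rw [hsp, h1]; exact ht)
          · exact ih3 p hp.squarefree hpM
              (by rw [hsp, h1]; exact (vspan M).neg_mem ht)
        have h1 : (A + B * Real.sqrt p) * (A - B * Real.sqrt p) = A ^ 2 - p * B ^ 2 := by
          linear_combination (-(B ^ 2)) * hps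
        have hxmul : (A + B * Real.sqrt p) *
            ((A - B * Real.sqrt p) * (A ^ 2 - p * B ^ 2)⁻¹) = 1 := by
          rw [← mul_assoc, h1, mul_inv_cancel₀ key]
        rw [inv_eq_of_mul_eq_one_right hxmul]
        have hz : (A ^ 2 - p * B ^ 2 : ℝ) ∈ vspan M := by
          have hA2 : A ^ 2 ∈ vspan M := by rw [sq]; exact mul_mem_vspan hA hA
          have hB2 : (p : ℝ) * B ^ 2 ∈ vspan M := by
            have hB2' : B ^ 2 ∈ vspan M := by rw [sq]; exact mul_mem_vspan hB hB
            have := (vspan M).smul_mem (p : ℚ) hB2'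
            simpa [Rat.smul_def] using this
          exact (vspan M).sub_mem hA2 hB2
        have hzi := ih2 _ hz key
        rw [mem_vspan_prime_mul hp hM0 hpM]
        exact ⟨A * (A ^ 2 - p * B ^ 2)⁻¹, mul_mem_vspan hA hzi,
          -(B * (A ^ 2 - p * B ^ 2)⁻¹),
          (vspan M).neg_mem (mul_mem_vspan hB hzi), by ring⟩
    · -- P3
      intro m hm hmdvd hmem'
      rw [mem_vspan_prime_mul hp hM0 hpM] at hmem'
      obtain ⟨A, hA, B, hB, heq⟩ := hmem'
      have hm0 : (0:ℝ) ≤ (m:ℝ) := by positivity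
      have hrel : (A ^ 2 + p * B ^ 2 - m) + (2 * A * B) * Real.sqrt p = 0 := by
        have h2 : (m : ℝ) = (A + B * Real.sqrt p) ^ 2 := by
          rw [← heq, Real.sq_sqrt hm0]
        linear_combination -h2 - B ^ 2 * hps
      have hX : (A ^ 2 + p * B ^ 2 - m : ℝ) ∈ vspan M := by
        have hA2 : A ^ 2 ∈ vspan M := by rw [sq]; exact mul_mem_vspan hA hA
        have hB2 : (p : ℝ) * B ^ 2 ∈ vspan M := by
          have hB2' : B ^ 2 ∈ vspan M := by rw [sq]; exact mul_mem_vspan hB hB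
          have := (vspan M).smul_mem (p : ℚ) hB2'
          simpa [Rat.smul_def] using this
        have hmQ : ((m : ℚ) : ℝ) ∈ vspan M := ratCast_mem_vspan hM0 _
        have : ((m : ℚ) : ℝ) = (m : ℝ) := by push_cast; ring
        exact (vspan M).sub_mem ((vspan M).add_mem hA2 hB2) (this ▸ hmQ)
      have hY : (2 * A * B : ℝ) ∈ vspan M := by
        have := (vspan M).smul_mem (2 : ℚ) (mul_mem_vspan hA hB)
        simpa [Rat.smul_def, mul_assoc] using this
      obtain ⟨-, hAB⟩ := key_zero hp hMsf hpM ih2 ih3 hX hY hrel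
      have hab : A = 0 ∨ B = 0 := by
        rcases mul_eq_zero.mp hAB with h | h
        · rcases mul_eq_zero.mp h with h' | h'
          · norm_num at h'
          · exact Or.inl h'
        · exact Or.inr h
      rcases hab with hA0 | hB0
      · -- A = 0 : √m = B √p
        rw [hA0, zero_add] at heq
        by_cases hpm : p ∣ m
        · obtain ⟨m', rfl⟩ := hpm
          have hm' : Squarefree m' := hm.squarefree_of_dvd (Dvd.intro_left p rfl)
          have hsplit : Real.sqrt (p * m' : ℕ) = Real.sqrt p * Real.sqrt m' := by
            push_cast
            rw [Real.sqrt_mul (by positivity)]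
          have hspne : Real.sqrt p ≠ 0 :=
            ne_of_gt (Real.sqrt_pos.mpr (by exact_mod_cast hp.pos))
          have hBm : Real.sqrt m' = B := by
            have h' : Real.sqrt m' * Real.sqrt p = B * Real.sqrt p := by
              rw [mul_comm, ← hsplit, heq]
            exact mul_right_cancel₀ hspne h'
          have hm'M : ¬ m' ∣ M := fun h => hmdvd (mul_dvd_mul_left p h)
          exact ih3 m' hm' hm'M (hBm ▸ hB)
        · have hcop : Nat.Coprime m p := (hp.coprime_iff_not_dvd.mpr hpm).symm
          have hsf : Squarefree (m * p) :=
            (Nat.squarefree_mul hcop).mpr ⟨hm, hp.squarefree⟩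
          have hval : Real.sqrt (m * p : ℕ) = B * p := by
            push_cast
            rw [Real.sqrt_mul hm0, heq]
            calc B * Real.sqrt p * Real.sqrt p = B * (Real.sqrt p * Real.sqrt p) := by ring
            _ = B * p := by rw [hps]
          have hmpM : ¬ (m * p) ∣ M := fun h => hpM (dvd_trans (Dvd.intro_left m rfl) h)
          have hBp : (B * (p : ℝ)) ∈ vspan M := by
            have h := (vspan M).smul_mem (p : ℚ) hB
            rw [Rat.smul_def, Rat.cast_natCast, mul_comm] at h
            exact h
          exact ih3 (m * p) hsf hmpM (hval ▸ hBp)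
      · -- B = 0 : √m = A
        rw [hB0, zero_mul, add_zero] at heq
        have hmM : ¬ m ∣ M := fun h => hmdvd (Dvd.dvd.mul_left h p)
        exact ih3 m hm hmM (heq ▸ hA)
    · -- P4
      intro c hc d hd
      rw [divisors_prime_mul hp hM0 hpM,
        Finset.sum_union (disjoint_divisors_image hp hpM)] at hc
      rw [Finset.sum_image (fun a _ b _ h => Nat.eq_of_mul_eq_mul_left hp.pos h)] at hc
      have hsplit : ∀ e ∈ M.divisors,
          (c (p * e) : ℝ) * Real.sqrt (p * e : ℕ) =
            ((c (p * e) : ℝ) * Real.sqrt e) * Real.sqrt p := by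
        intro e he
        push_cast
        rw [Real.sqrt_mul (by positivity : (0:ℝ) ≤ (p:ℝ))]
        ring
      rw [Finset.sum_congr rfl hsplit, ← Finset.sum_mul] at hc
      obtain ⟨hA0, hB0⟩ := key_zero hp hMsf hpM ih2 ih3
        (sum_mem_vspan c) (sum_mem_vspan (fun e => c (p * e))) hc
      rw [divisors_prime_mul hp hM0 hpM, Finset.mem_union] at hd
      rcases hd with hd | hd
      · exact ih4 c hA0 d hd
      · obtain ⟨e, he, rfl⟩ := Finset.mem_image.mp hd
        exact ih4 (fun e => c (p * e)) hB0 e he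

theorem sqrt_linear_independent {N : ℕ} (hN : Squarefree N) (c : ℕ → ℚ)
    (h : ∑ d ∈ N.divisors, (c d : ℝ) * Real.sqrt d = 0) : ∀ d ∈ N.divisors, c d = 0 :=
  (vspan_main N hN).2.2 c h

lemma prime_pow_bound {ε δ C₀ : ℝ} (hε : 0 < ε) (hδdef : δ = (2:ℝ)^ε - 1)
    (hC₀def : C₀ = 1 + δ⁻¹) {p e : ℕ} (hp : 2 ≤ p) :
    ((e : ℝ) + 1) ≤ (if (p:ℝ) < (2:ℝ)^(1/ε) then C₀ else 1) * ((p:ℝ) ^ e) ^ ε := by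
  have h2ε : 1 < (2 : ℝ) ^ ε := (Real.one_lt_rpow_iff_of_pos (by norm_num)).mpr (Or.inl ⟨by norm_num, hε⟩)
  have hδ : 0 < δ := by rw [hδdef]; linarith
  have hC₀ : 1 ≤ C₀ := by
    have : 0 < δ⁻¹ := inv_pos.mpr hδ
    rw [hC₀def]; linarith
  have hp0 : (0:ℝ) ≤ (p:ℝ) := by positivity
  have hswap : ((p:ℝ) ^ e) ^ ε = ((p:ℝ) ^ ε) ^ e := by
    rw [← Real.rpow_natCast (p:ℝ) e, ← Real.rpow_mul hp0, mul_comm, Real.rpow_mul hp0,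
      Real.rpow_natCast]
  have h2p : (2:ℝ)^ε ≤ (p:ℝ)^ε :=
    Real.rpow_le_rpow (by norm_num) (by exact_mod_cast hp) hε.le
  rw [hswap]
  by_cases hsmall : (p:ℝ) < (2:ℝ)^(1/ε)
  · rw [if_pos hsmall]
    have hb : (1:ℝ) + (e:ℝ) * δ ≤ (1 + δ) ^ e := one_add_mul_le_pow (by linarith) e
    have h1δ : (1:ℝ) + δ = (2:ℝ)^ε := by rw [hδdef]; ring
    have hstep1 : (e:ℝ) + 1 ≤ C₀ * (1 + (e:ℝ) * δ) := by
      have hinv : δ * δ⁻¹ = 1 := mul_inv_cancel₀ hδ.ne'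
      have he0 : (0:ℝ) ≤ (e:ℝ) := by positivity
      have hi0 : (0:ℝ) ≤ δ⁻¹ := (inv_pos.mpr hδ).le
      rw [hC₀def]
      nlinarith [mul_nonneg he0 hδ.le, mul_nonneg hi0 (mul_nonneg he0 hδ.le)]
    have hstep2 : C₀ * (1 + (e:ℝ) * δ) ≤ C₀ * ((p:ℝ)^ε) ^ e := by
      have h2 : ((1:ℝ) + δ) ^ e ≤ ((p:ℝ)^ε) ^ e := by
        apply pow_le_pow_left₀ (by linarith)
        rw [h1δ]; exact h2p
      have := hb.trans h2
      nlinarith [this]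
    linarith
  · rw [if_neg hsmall, one_mul]
    push_neg at hsmall
    have h2le : (2:ℝ) ≤ (p:ℝ)^ε := by
      have := Real.rpow_le_rpow (by positivity) hsmall hε.le
      rwa [← Real.rpow_mul (by norm_num), one_div, inv_mul_cancel₀ hε.ne', Real.rpow_one] at this
    have he2 : (e:ℝ) + 1 ≤ (2:ℝ) ^ e := by
      have := Nat.lt_two_pow_self (n := e)
      have : (e + 1 : ℕ) ≤ 2 ^ e := this
      exact_mod_cast this
    calc (e:ℝ) + 1 ≤ (2:ℝ) ^ e := he2
      _ ≤ ((p:ℝ)^ε) ^ e := pow_le_pow_left₀ (by norm_num) h2le e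

lemma card_divisors_le_rpow {ε : ℝ} (hε : 0 < ε) :
    ∃ C : ℝ, 1 ≤ C ∧ ∀ n : ℕ, n ≠ 0 → (n.divisors.card : ℝ) ≤ C * (n : ℝ) ^ ε := by
  set δ : ℝ := (2 : ℝ) ^ ε - 1 with hδdef
  set C₀ : ℝ := 1 + δ⁻¹ with hC₀def
  have h2ε : 1 < (2 : ℝ) ^ ε := (Real.one_lt_rpow_iff_of_pos (by norm_num)).mpr (Or.inl ⟨by norm_num, hε⟩)
  have hδ : 0 < δ := by rw [hδdef]; linarith
  have hC₀ : 1 ≤ C₀ := by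
    have : 0 < δ⁻¹ := inv_pos.mpr hδ
    rw [hC₀def]; linarith
  set B : ℕ := ⌈(2 : ℝ) ^ (1 / ε)⌉₊ with hBdef
  refine ⟨C₀ ^ B, one_le_pow₀ hC₀, ?_⟩
  intro n hn
  -- n as product over prime factors
  have hprod : (n : ℝ) = ∏ p ∈ n.primeFactors, (p:ℝ) ^ (n.factorization p) := by
    conv_lhs => rw [← Nat.factorization_prod_pow_eq_self hn]
    rw [Nat.prod_factorization_eq_prod_primeFactors]
    push_cast
    rfl
  have hcard : (n.divisors.card : ℝ) = ∏ p ∈ n.primeFactors, ((n.factorization p : ℝ) + 1) := by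
    rw [Nat.card_divisors hn]
    push_cast
    rfl
  have hrpow : (n : ℝ) ^ ε = ∏ p ∈ n.primeFactors, ((p:ℝ) ^ (n.factorization p)) ^ ε := by
    rw [hprod, ← Real.finset_prod_rpow _ _ (fun p _ => by positivity) ε]
  have hpoint : ∀ p ∈ n.primeFactors,
      ((n.factorization p : ℝ) + 1) ≤
        (if (p:ℝ) < (2:ℝ)^(1/ε) then C₀ else 1) * ((p:ℝ) ^ (n.factorization p)) ^ ε := by
    intro p hp
    exact prime_pow_bound hε hδdef hC₀def (Nat.prime_of_mem_primeFactors hp).two_le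
  have hchain : (n.divisors.card : ℝ) ≤
      ∏ p ∈ n.primeFactors,
        ((if (p:ℝ) < (2:ℝ)^(1/ε) then C₀ else 1) * ((p:ℝ) ^ (n.factorization p)) ^ ε) := by
    rw [hcard]
    exact Finset.prod_le_prod (fun p _ => by positivity) hpoint
  rw [Finset.prod_mul_distrib] at hchain
  have hCbound : (∏ p ∈ n.primeFactors, (if (p:ℝ) < (2:ℝ)^(1/ε) then C₀ else 1)) ≤ C₀ ^ B := by
    rw [Finset.prod_ite, Finset.prod_const, Finset.prod_const, one_pow, mul_one]
    apply pow_le_pow_right₀ hC₀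
    have hsub : n.primeFactors.filter (fun p : ℕ => (p:ℝ) < (2:ℝ)^(1/ε)) ⊆ Finset.range B := by
      intro p hp
      rw [Finset.mem_filter] at hp
      rw [Finset.mem_range]
      have h1 : (p:ℝ) < (B:ℝ) := lt_of_lt_of_le hp.2 (Nat.le_ceil _)
      exact_mod_cast h1
    calc (n.primeFactors.filter (fun p : ℕ => (p:ℝ) < (2:ℝ)^(1/ε))).card
        ≤ (Finset.range B).card := Finset.card_le_card hsub
      _ = B := Finset.card_range B
  calc (n.divisors.card : ℝ)
      ≤ (∏ p ∈ n.primeFactors, (if (p:ℝ) < (2:ℝ)^(1/ε) then C₀ else 1)) *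
        (∏ p ∈ n.primeFactors, ((p:ℝ) ^ (n.factorization p)) ^ ε) := hchain
    _ ≤ C₀ ^ B * (n:ℝ) ^ ε := by
        rw [hrpow]
        apply mul_le_mul_of_nonneg_right hCbound
        exact Finset.prod_nonneg (fun p _ => by positivity)

lemma squarefree_prod_primes {s : Finset ℕ} (hs : ∀ p ∈ s, p.Prime) :
    Squarefree (∏ p ∈ s, p) := by
  induction s using Finset.induction_on with
  | empty => simpa using squarefree_one
  | @insert p s hnotmem ih =>
    rw [Finset.prod_insert hnotmem]
    have hcop : Nat.Coprime p (∏ q ∈ s, q) := by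
      apply Nat.Coprime.prod_right
      intro q hq
      exact (Nat.coprime_primes (hs p (Finset.mem_insert_self p s))
        (hs q (Finset.mem_insert_of_mem hq))).mpr
        (fun h => hnotmem (h ▸ hq))
    exact (Nat.squarefree_mul hcop).mpr
      ⟨(hs p (Finset.mem_insert_self p s)).squarefree,
        ih (fun q hq => hs q (Finset.mem_insert_of_mem hq))⟩

lemma summable_pi_prod : ∀ {k : ℕ} (g : Fin k → ℕ → ℝ), (∀ i n, 0 ≤ g i n) →
    (∀ i, Summable (g i)) → Summable (fun m : Fin k → ℕ => ∏ i, g i (m i)) := by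
  intro k
  induction k with
  | zero =>
    intro g _ _
    have : Finite (Fin 0 → ℕ) := by
      have : IsEmpty (Fin 0) := by infer_instance
      infer_instance
    exact Summable.of_finite
  | succ k ihk =>
    intro g hg0 hg
    have h2 : Summable (fun m : Fin k → ℕ => ∏ i, (fun i => g (Fin.succ i)) i (m i)) :=
      ihk (fun i => g (Fin.succ i)) (fun i n => hg0 _ n) (fun i => hg (Fin.succ i))
    have hsum := Summable.mul_of_nonneg (hg 0) h2 (fun n => hg0 0 n)
        (fun m => Finset.prod_nonneg (fun i _ => hg0 _ _))
    refine (Equiv.summable_iff (Fin.consEquiv (fun _ : Fin (k+1) => ℕ))).mp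
      (Summable.congr hsum ?_)
    intro x
    simp only [Function.comp_apply, Fin.consEquiv_apply]
    rw [Fin.prod_univ_succ]
    simp [Fin.cons_zero, Fin.cons_succ]

lemma fiber_pair {k l : ℕ} (n q m : Fin k → ℕ) (hn : ∀ j, 1 ≤ n j)
    (hdq : ∀ j, (m j)^2 * q j = n j) (hsq : ∀ j, Squarefree (q j))
    (heq : ∑ j ∈ Finset.univ.filter (fun j : Fin k => (j : ℕ) < l), Real.sqrt (n j)
         = ∑ j ∈ Finset.univ.filter (fun j : Fin k => l ≤ (j : ℕ)), Real.sqrt (n j)) :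
    ∀ j0, ∃ j', j' ≠ j0 ∧ q j' = q j0 := by
  classical
  have hm1 : ∀ j, 1 ≤ m j := by
    intro j
    rcases Nat.eq_zero_or_pos (m j) with h | h
    · exfalso
      have := hdq j
      rw [h] at this
      simp at this
      exact absurd (this ▸ hn j) (by simp)
    · exact h
  set A := ∏ j, q j with hAdef
  have hA0 : A ≠ 0 := by
    apply Finset.prod_ne_zero_iff.mpr
    intro j _
    exact (hsq j).ne_zero
  set N := ∏ p ∈ A.primeFactors, p with hNdef
  have hNsf : Squarefree N :=
    squarefree_prod_primes (fun p hp => Nat.prime_of_mem_primeFactors hp)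
  have hN0 : N ≠ 0 := hNsf.ne_zero
  have hqN : ∀ j, q j ∣ N := by
    intro j
    have h1 : (q j).primeFactors ⊆ A.primeFactors :=
      Nat.primeFactors_mono (Finset.dvd_prod_of_mem _ (Finset.mem_univ j)) hA0
    calc q j = ∏ p ∈ (q j).primeFactors, p :=
          (Nat.prod_primeFactors_of_squarefree (hsq j)).symm
      _ ∣ N := Finset.prod_dvd_prod_of_subset _ _ _ h1
  have hsqrt : ∀ j, Real.sqrt (n j) = (m j : ℝ) * Real.sqrt (q j) := by
    intro j
    rw [← hdq j]
    push_cast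
    rw [Real.sqrt_mul (by positivity), Real.sqrt_sq (by positivity)]
  set L := Finset.univ.filter (fun j : Fin k => (j : ℕ) < l) with hLdef
  set R := Finset.univ.filter (fun j : Fin k => l ≤ (j : ℕ)) with hRdef
  set c : ℕ → ℚ := fun v => (∑ j ∈ L.filter (fun j => q j = v), (m j : ℚ))
    - ∑ j ∈ R.filter (fun j => q j = v), (m j : ℚ) with hcdef
  have hside : ∀ S : Finset (Fin k),
      ∑ d ∈ N.divisors, (∑ j ∈ S.filter (fun j => q j = d), (m j : ℚ) : ℚ) * Real.sqrt d
        = ∑ j ∈ S, Real.sqrt (n j) := by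
    intro S
    have hmaps : ∀ j ∈ S, q j ∈ N.divisors :=
      fun j _ => Nat.mem_divisors.mpr ⟨hqN j, hN0⟩
    rw [← Finset.sum_fiberwise_of_maps_to hmaps (fun j => Real.sqrt (n j))]
    apply Finset.sum_congr rfl
    intro d _
    rw [Rat.cast_sum, Finset.sum_mul]
    apply Finset.sum_congr rfl
    intro j hj
    obtain ⟨-, hqj⟩ := Finset.mem_filter.mp hj
    rw [hsqrt j, hqj]
    push_cast
    ring
  have hrel : ∑ d ∈ N.divisors, (c d : ℝ) * Real.sqrt d = 0 := by
    have hsplit : ∀ d ∈ N.divisors, (c d : ℝ) * Real.sqrt d =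
        ((∑ j ∈ L.filter (fun j => q j = d), (m j : ℚ) : ℚ) : ℝ) * Real.sqrt d
          - ((∑ j ∈ R.filter (fun j => q j = d), (m j : ℚ) : ℚ) : ℝ) * Real.sqrt d := by
      intro d _
      rw [hcdef]
      push_cast
      ring
    rw [Finset.sum_congr rfl hsplit, Finset.sum_sub_distrib, hside L, hside R, heq, sub_self]
  have hc := sqrt_linear_independent hNsf c hrel
  intro j0
  by_contra hcon
  push_neg at hcon
  have h0 : c (q j0) = 0 := hc (q j0) (Nat.mem_divisors.mpr ⟨hqN j0, hN0⟩)
  have hm0 : (0 : ℚ) < (m j0 : ℚ) := by exact_mod_cast hm1 j0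
  rcases lt_or_ge ((j0 : ℕ)) l with hj0 | hj0
  · have hLf : L.filter (fun j => q j = q j0) = {j0} := by
      ext j
      simp only [Finset.mem_filter, Finset.mem_singleton, hLdef, Finset.mem_univ, true_and]
      constructor
      · rintro ⟨-, hq⟩
        by_contra hne
        exact hcon j hne hq
      · rintro rfl
        exact ⟨hj0, rfl⟩
    have hRf : R.filter (fun j => q j = q j0) = ∅ := by
      apply Finset.eq_empty_of_forall_notMem
      intro j hj
      simp only [Finset.mem_filter, hRdef, Finset.mem_univ, true_and] at hj
      obtain ⟨hlj, hq⟩ := hj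
      rcases eq_or_ne j j0 with rfl | hne
      · omega
      · exact hcon j hne hq
    rw [hcdef] at h0
    simp only [hLf, hRf, Finset.sum_singleton, Finset.sum_empty, sub_zero] at h0
    exact absurd h0 (ne_of_gt hm0)
  · have hLf : L.filter (fun j => q j = q j0) = ∅ := by
      apply Finset.eq_empty_of_forall_notMem
      intro j hj
      simp only [Finset.mem_filter, hLdef, Finset.mem_univ, true_and] at hj
      obtain ⟨hlj, hq⟩ := hj
      rcases eq_or_ne j j0 with rfl | hne
      · omega
      · exact hcon j hne hq
    have hRf : R.filter (fun j => q j = q j0) = {j0} := by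
      ext j
      simp only [Finset.mem_filter, Finset.mem_singleton, hRdef, Finset.mem_univ, true_and]
      constructor
      · rintro ⟨-, hq⟩
        by_contra hne
        exact hcon j hne hq
      · rintro rfl
        exact ⟨hj0, rfl⟩
    rw [hcdef] at h0
    simp only [hLf, hRf, Finset.sum_singleton, Finset.sum_empty, zero_sub, neg_eq_zero] at h0
    exact absurd h0 (ne_of_gt hm0)

lemma sigmaA_nonneg (a : ℝ) (n : ℕ) : 0 ≤ sigmaA a n :=
  Finset.sum_nonneg (fun d _ => Real.rpow_nonneg (by positivity) a)

noncomputable def sqpart (x : ℕ) : ℕ := (Nat.sq_mul_squarefree x).choose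

noncomputable def mpart (x : ℕ) : ℕ := (Nat.sq_mul_squarefree x).choose_spec.choose

lemma sqpart_spec (x : ℕ) : (mpart x)^2 * sqpart x = x ∧ Squarefree (sqpart x) := by
  obtain ⟨h1, h2⟩ := (Nat.sq_mul_squarefree x).choose_spec.choose_spec
  exact ⟨h1, h2⟩

lemma sqpart_pos {x : ℕ} (hx : 1 ≤ x) : 1 ≤ sqpart x := by
  rcases Nat.eq_zero_or_pos (sqpart x) with h | h
  · exfalso
    have := (sqpart_spec x).1
    rw [h, mul_zero] at this
    omega
  · exact h

lemma mpart_pos {x : ℕ} (hx : 1 ≤ x) : 1 ≤ mpart x := by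
  rcases Nat.eq_zero_or_pos (mpart x) with h | h
  · exfalso
    have := (sqpart_spec x).1
    rw [h] at this
    simp at this
    omega
  · exact h

lemma factor_bound {a s ε u C : ℝ} (ha₂ : a < 0) (hu : u = s - ε)
    (hC : ∀ n : ℕ, n ≠ 0 → ((n.divisors.card : ℝ)) ≤ C * (n : ℝ) ^ ε)
    {x : ℕ} (hx : 1 ≤ x) :
    sigmaA a x / ((x : ℝ)) ^ s ≤
      C * (((mpart x : ℝ) ^ (2 * u))⁻¹ * ((sqpart x : ℝ) ^ u)⁻¹) := by
  have hx0 : (0 : ℝ) < (x : ℝ) := by exact_mod_cast hx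
  have hσcard : sigmaA a x ≤ (x.divisors.card : ℝ) := by
    have h := Finset.sum_le_card_nsmul x.divisors (fun d => (d : ℝ) ^ a) 1
      (fun d hd => Real.rpow_le_one_of_one_le_of_nonpos
        (by exact_mod_cast Nat.pos_of_mem_divisors hd) ha₂.le)
    simpa [sigmaA] using h
  have hσ : sigmaA a x ≤ C * (x : ℝ) ^ ε := hσcard.trans (hC x (by omega))
  have hmp : (0:ℝ) ≤ (mpart x : ℝ) := by positivity
  have hqp : (0:ℝ) ≤ (sqpart x : ℝ) := by positivity
  calc sigmaA a x / (x : ℝ) ^ s ≤ (C * (x : ℝ) ^ ε) / (x : ℝ) ^ s := by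
        gcongr
    _ = C * ((x : ℝ) ^ u)⁻¹ := by
        rw [mul_div_assoc, ← Real.rpow_sub hx0]
        congr 1
        rw [show ε - s = -u by linarith [hu], Real.rpow_neg hx0.le]
    _ = C * (((mpart x : ℝ) ^ (2 * u))⁻¹ * ((sqpart x : ℝ) ^ u)⁻¹) := by
        congr 1
        have hxe : (x : ℝ) = ((mpart x : ℝ)) ^ 2 * (sqpart x : ℝ) := by
          exact_mod_cast ((sqpart_spec x).1).symm
        rw [hxe, Real.mul_rpow (by positivity) (by positivity), mul_inv]
        congr 2
        rw [← Real.rpow_natCast ((mpart x : ℝ)) 2, ← Real.rpow_mul hmp]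
        norm_num

noncomputable def rfun {k : ℕ} (v : Fin k → ℕ) (j : Fin k) : Fin k :=
  (Finset.univ.filter (fun i => sqpart (v i) = sqpart (v j))).min' ⟨j, by simp⟩

lemma rfun_spec {k : ℕ} (v : Fin k → ℕ) (j : Fin k) :
    sqpart (v (rfun v j)) = sqpart (v j) := by
  have h := Finset.min'_mem (Finset.univ.filter (fun i => sqpart (v i) = sqpart (v j)))
    ⟨j, by simp⟩
  exact (Finset.mem_filter.mp h).2

lemma rfun_congr {k : ℕ} (v : Fin k → ℕ) {i j : Fin k}
    (h : sqpart (v i) = sqpart (v j)) : rfun v i = rfun v j := by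
  unfold rfun
  congr 1
  ext i'
  simp [h]

lemma rfun_idem {k : ℕ} (v : Fin k → ℕ) (j : Fin k) : rfun v (rfun v j) = rfun v j :=
  rfun_congr v (rfun_spec v j)

noncomputable def iotaF {k : ℕ} (v : Fin k → ℕ) :
    (Fin k → Fin k) × ((Fin k → ℕ) × (Fin k → ℕ)) :=
  (rfun v, (fun i => if rfun v i = i then sqpart (v i) else 1, fun j => mpart (v j)))

lemma iotaF_recover {k : ℕ} (v : Fin k → ℕ) (j : Fin k) :
    v j = ((iotaF v).2.2 j)^2 * (iotaF v).2.1 ((iotaF v).1 j) := by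
  unfold iotaF
  dsimp only
  rw [if_pos (rfun_idem v j), rfun_spec v j, (sqpart_spec (v j)).1]

lemma iotaF_injective {k : ℕ} : Function.Injective (iotaF (k := k)) := by
  intro v v' h
  funext j
  rw [iotaF_recover v j, iotaF_recover v' j, h]

noncomputable def majorant (k : ℕ) (C u : ℝ)
    (y : (Fin k → Fin k) × ((Fin k → ℕ) × (Fin k → ℕ))) : ℝ :=
  C ^ k * ((∏ i, (if y.1 i = i then ((y.2.1 i : ℝ) ^ (2*u))⁻¹
      else ((y.2.1 i : ℝ) ^ (2:ℝ))⁻¹)) * ∏ j, ((y.2.2 j : ℝ) ^ (2*u))⁻¹)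

lemma majorant_nonneg (k : ℕ) {C u : ℝ} (hC : 0 ≤ C) :
    ∀ y, 0 ≤ majorant k C u y := by
  intro y
  unfold majorant
  apply mul_nonneg (by positivity)
  apply mul_nonneg
  · exact Finset.prod_nonneg (fun i _ => by split <;> positivity)
  · exact Finset.prod_nonneg (fun j _ => by positivity)

lemma summable_majorant (k : ℕ) {C u : ℝ} (hC : 0 ≤ C) (hu : 1 < 2 * u) :
    Summable (majorant k C u) := by
  have h0 : 0 ≤ majorant k C u := majorant_nonneg k hC
  refine (summable_prod_of_nonneg h0).mpr ⟨?_, Summable.of_finite⟩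
  intro r
  have hQ : Summable (fun Q : Fin k → ℕ =>
      ∏ i, (if r i = i then ((Q i : ℝ) ^ (2*u))⁻¹ else ((Q i : ℝ) ^ (2:ℝ))⁻¹)) := by
    have h1 : ∀ (i : Fin k) (n : ℕ),
        0 ≤ (if r i = i then ((n : ℝ) ^ (2*u))⁻¹ else ((n : ℝ) ^ (2:ℝ))⁻¹) := by
      intro i n
      split <;> positivity
    have h2 : ∀ i : Fin k,
        Summable (fun n : ℕ => if r i = i then ((n : ℝ) ^ (2*u))⁻¹ else ((n : ℝ) ^ (2:ℝ))⁻¹) := by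
      intro i
      by_cases hri : r i = i
      · simp only [if_pos hri]
        exact summable_nat_rpow_inv.mpr hu
      · simp only [if_neg hri]
        exact summable_nat_rpow_inv.mpr one_lt_two
    exact summable_pi_prod
      (fun i x => if r i = i then ((x : ℝ) ^ (2*u))⁻¹ else ((x : ℝ) ^ (2:ℝ))⁻¹) h1 h2
  have hM : Summable (fun m : Fin k → ℕ => ∏ j, ((m j : ℝ) ^ (2*u))⁻¹) := by
    have h1 : ∀ (i : Fin k) (n : ℕ), 0 ≤ ((n : ℝ) ^ (2*u))⁻¹ := fun i n => by positivity
    have h2 : ∀ i : Fin k, Summable (fun n : ℕ => ((n : ℝ) ^ (2*u))⁻¹) :=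
      fun i => summable_nat_rpow_inv.mpr hu
    exact summable_pi_prod (fun i x => ((x : ℝ) ^ (2*u))⁻¹) h1 h2
  have h0Q : ∀ Q : Fin k → ℕ,
      0 ≤ ∏ i, (if r i = i then ((Q i : ℝ) ^ (2*u))⁻¹ else ((Q i : ℝ) ^ (2:ℝ))⁻¹) :=
    fun Q => Finset.prod_nonneg (fun i _ => by split <;> positivity)
  have h0M : ∀ m : Fin k → ℕ, 0 ≤ ∏ j, ((m j : ℝ) ^ (2*u))⁻¹ :=
    fun m => Finset.prod_nonneg (fun j _ => by positivity)
  have hprod := Summable.mul_of_nonneg hQ hM h0Q h0M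
  exact Summable.congr (hprod.mul_left (C ^ k)) (fun y => rfl)

/-- For `-1/2 < a < 0`, `k ≥ 2`, `1 ≤ l < k`, the series
`s_{k;l}(σ_a) = ∑ σ_a(n_1)⋯σ_a(n_k)/(n_1⋯n_k)^{3/4+a/2}` over tuples with
`√n_1 + ⋯ + √n_l = √n_{l+1} + ⋯ + √n_k` converges absolutely. -/
theorem stmt_11 (a : ℝ) (ha₁ : -1/2 < a) (ha₂ : a < 0) (k l : ℕ)
    (hk : 2 ≤ k) (hl₁ : 1 ≤ l) (hl₂ : l < k) :
    Summable (fun n : {n : Fin k → ℕ // (∀ j, 1 ≤ n j) ∧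
        ∑ j ∈ Finset.univ.filter (fun j : Fin k => (j : ℕ) < l), Real.sqrt (n j)
          = ∑ j ∈ Finset.univ.filter (fun j : Fin k => l ≤ (j : ℕ)), Real.sqrt (n j)} =>
      |(∏ j, sigmaA a (n.1 j)) / (∏ j, (n.1 j : ℝ)) ^ (3/4 + a/2)|) := by
  classical
  set s : ℝ := 3/4 + a/2 with hsdef
  have hs2 : 1/2 < s := by rw [hsdef]; linarith
  set ε : ℝ := (s - 1/2)/2 with hεdef
  have hε : 0 < ε := by rw [hεdef]; linarith
  set u : ℝ := s - ε with hudef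
  have h2u : 1 < 2*u := by rw [hudef, hεdef]; linarith
  have hupos : 0 < u := by linarith
  obtain ⟨C, hC1, hC⟩ := card_divisors_le_rpow hε
  have hC0 : (0:ℝ) ≤ C := le_trans zero_le_one hC1
  have hsum := summable_majorant k hC0 h2u
  refine Summable.of_nonneg_of_le (fun n => abs_nonneg _) ?_
    (hsum.comp_injective (fun n n' h => Subtype.ext (iotaF_injective h)))
  rintro ⟨v, hv1, hveq⟩
  simp only [Function.comp_apply]
  set q : Fin k → ℕ := fun j => sqpart (v j) with hqdef
  set m : Fin k → ℕ := fun j => mpart (v j) with hmdef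
  set r : Fin k → Fin k := rfun v with hrdef
  have hq1 : ∀ j, 1 ≤ q j := fun j => sqpart_pos (hv1 j)
  have hm1 : ∀ j, 1 ≤ m j := fun j => mpart_pos (hv1 j)
  have hdq : ∀ j, (m j)^2 * q j = v j := fun j => (sqpart_spec (v j)).1
  have hsq : ∀ j, Squarefree (q j) := fun j => (sqpart_spec (v j)).2
  have hfp := fiber_pair v q m hv1 hdq hsq hveq
  have hvpos : ∀ j, (0:ℝ) < (v j : ℝ) := fun j => by exact_mod_cast hv1 j
  have hmaj : majorant k C u (iotaF v) = C ^ k *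
      ((∏ i, (if r i = i then ((q i : ℝ) ^ (2*u))⁻¹ else 1)) *
        ∏ j, ((m j : ℝ) ^ (2*u))⁻¹) := by
    unfold majorant iotaF
    dsimp only
    congr 2
    apply Finset.prod_congr rfl
    intro i _
    by_cases hri : rfun v i = i
    · rw [if_pos hri, if_pos hri, if_pos hri]
    · rw [if_neg hri, if_neg hri, if_neg (show ¬ r i = i from hri)]
      norm_num
  have habs : |(∏ j, sigmaA a (v j)) / (∏ j, (v j : ℝ)) ^ s|
      = ∏ j, (sigmaA a (v j) / (v j : ℝ) ^ s) := by
    rw [← Real.finset_prod_rpow Finset.univ _ (fun j _ => (hvpos j).le) s,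
      ← Finset.prod_div_distrib]
    exact abs_of_nonneg (Finset.prod_nonneg
      (fun j _ => div_nonneg (sigmaA_nonneg a _) (Real.rpow_nonneg (hvpos j).le s)))
  have hqprod : (∏ j, ((q j : ℝ) ^ u)⁻¹)
      ≤ ∏ i, (if r i = i then ((q i : ℝ) ^ (2*u))⁻¹ else 1) := by
    rw [← Finset.prod_fiberwise_of_maps_to
      (fun j (_ : j ∈ Finset.univ) => Finset.mem_univ (r j)) (fun j => ((q j : ℝ) ^ u)⁻¹)]
    apply Finset.prod_le_prod
    · intro i _
      exact Finset.prod_nonneg (fun j _ => by positivity)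
    · intro i _
      by_cases hri : r i = i
      · rw [if_pos hri]
        have hfib : ∀ j ∈ Finset.univ.filter (fun j => r j = i),
            ((q j : ℝ) ^ u)⁻¹ = ((q i : ℝ) ^ u)⁻¹ := by
          intro j hj
          have hji : r j = i := (Finset.mem_filter.mp hj).2
          have hqq : q j = q i := by
            rw [← hji]
            exact (rfun_spec v j).symm
          rw [hqq]
        rw [Finset.prod_congr rfl hfib, Finset.prod_const]
        obtain ⟨j', hne, hq'⟩ := hfp i
        have hj'fib : j' ∈ Finset.univ.filter (fun j => r j = i) := by
          have hrj' : r j' = r i := rfun_congr v hq'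
          simp only [Finset.mem_filter, Finset.mem_univ, true_and]
          rw [hrj', hri]
        have hifib : i ∈ Finset.univ.filter (fun j => r j = i) := by
          simp only [Finset.mem_filter, Finset.mem_univ, true_and]
          exact hri
        have hcard : 2 ≤ (Finset.univ.filter (fun j => r j = i)).card := by
          have hsub : ({j', i} : Finset (Fin k)) ⊆ Finset.univ.filter (fun j => r j = i) := by
            intro x hx
            rcases Finset.mem_insert.mp hx with rfl | hx
            · exact hj'fib
            · rw [Finset.mem_singleton.mp hx]
              exact hifib
          calc 2 = ({j', i} : Finset (Fin k)).card := (Finset.card_pair hne).symm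
            _ ≤ _ := Finset.card_le_card hsub
        have hy1 : ((q i : ℝ) ^ u)⁻¹ ≤ 1 := by
          apply inv_le_one_of_one_le₀
          exact Real.one_le_rpow (by exact_mod_cast hq1 i) hupos.le
        have hy0 : (0:ℝ) ≤ ((q i : ℝ) ^ u)⁻¹ := by positivity
        calc (((q i : ℝ) ^ u)⁻¹) ^ (Finset.univ.filter (fun j => r j = i)).card
            ≤ (((q i : ℝ) ^ u)⁻¹) ^ 2 := pow_le_pow_of_le_one hy0 hy1 hcard
          _ = ((q i : ℝ) ^ (2*u))⁻¹ := by
              rw [inv_pow]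
              congr 1
              rw [← Real.rpow_natCast ((q i : ℝ) ^ u) 2, ← Real.rpow_mul (by positivity)]
              norm_num [mul_comm]
      · rw [if_neg hri]
        have hempty : Finset.univ.filter (fun j => r j = i) = ∅ := by
          apply Finset.eq_empty_of_forall_notMem
          intro j hj
          have hji : r j = i := (Finset.mem_filter.mp hj).2
          apply hri
          rw [← hji]
          exact rfun_idem v j
        rw [hempty, Finset.prod_empty]
  calc |(∏ j, sigmaA a (v j)) / (∏ j, (v j : ℝ)) ^ s|
      = ∏ j, (sigmaA a (v j) / (v j : ℝ) ^ s) := habs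
    _ ≤ ∏ j, (C * (((m j : ℝ) ^ (2*u))⁻¹ * ((q j : ℝ) ^ u)⁻¹)) := by
        apply Finset.prod_le_prod
        · intro j _
          exact div_nonneg (sigmaA_nonneg a _) (Real.rpow_nonneg (hvpos j).le s)
        · intro j _
          exact factor_bound ha₂ hudef hC (hv1 j)
    _ = C ^ k * ((∏ j, ((q j : ℝ) ^ u)⁻¹) * ∏ j, ((m j : ℝ) ^ (2*u))⁻¹) := by
        rw [Finset.prod_mul_distrib, Finset.prod_mul_distrib, Finset.prod_const,
          Finset.card_univ, Fintype.card_fin]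
        ring
    _ ≤ C ^ k * ((∏ i, (if r i = i then ((q i : ℝ) ^ (2*u))⁻¹ else 1)) *
          ∏ j, ((m j : ℝ) ^ (2*u))⁻¹) := by
        have hmnn : (0:ℝ) ≤ ∏ j, ((m j : ℝ) ^ (2*u))⁻¹ :=
          Finset.prod_nonneg (fun j _ => by positivity)
        have hCk : (0:ℝ) ≤ C ^ k := by positivity
        apply mul_le_mul_of_nonneg_left (mul_le_mul_of_nonneg_right hqprod hmnn) hCk
    _ = majorant k C u (iotaF v) := hmaj.symm
end
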